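/- arXiv:2301.11540 — 10 statements merged into one kernel-verified Lean document; each statement's English description precedes it below -/
import Mathlib

section
/- For a > -1 and -1 < b < 0 with a + b + 1 < 0, the function Q_{a,b} fails the Cauchy–Schwarz inequality: there exists t ∈ (0,1) with Q_{a,b}(1,t) > sqrt(Q_{a,b}(1,1) Q_{a,b}(t,t)); hence Q_{a,b} is not a covariance function. -/
open MeasureTheory intervalIntegral Real Filter

/-- The weighted sub-fractional kernel `Q_{a,b}`. -/
noncomputable def Q (a b w z : ℝ) : ℝ :=
  (1 / (1 - b)) * ∫ s in (0:ℝ)..(min w z),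
    s ^ a * ((z - s) ^ b + (w - s) ^ b - (w + z - 2 * s) ^ b)

/-- Positive semidefiniteness of a kernel on `[0,∞)²`. -/
def PosSemidef (K : ℝ → ℝ → ℝ) : Prop :=
  ∀ (n : ℕ) (t : Fin n → ℝ), (∀ i, 0 ≤ t i) → ∀ c : Fin n → ℝ,
    0 ≤ ∑ i, ∑ j, c i * c j * K (t i) (t j)

/-- The real Beta function as an integral. -/
noncomputable def Beta (x y : ℝ) : ℝ :=
  ∫ u in (0:ℝ)..1, u ^ (x - 1) * (1 - u) ^ (y - 1)

section Aux
open Set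
variable {a b : ℝ}

variable {a b : ℝ}

/-- Integrability of `s^a (t-s)^b` on `[0,t]`. -/
lemma int_kernel (ha : -1 < a) (hb : -1 < b) (t : ℝ) (ht : 0 < t) :
    IntervalIntegrable (fun s => s ^ a * (t - s) ^ b) volume 0 t := by
  have h1 : IntervalIntegrable (fun s => s ^ a * (t - s) ^ b) volume 0 (t/2) := by
    apply IntervalIntegrable.mul_continuousOn (intervalIntegrable_rpow' ha)
    apply ContinuousOn.rpow_const (by fun_prop)
    intro x hx
    rw [uIcc_of_le (by linarith)] at hx
    left
    have := hx.2
    intro h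
    nlinarith [hx.1, hx.2]
  have h2 : IntervalIntegrable (fun s => s ^ a * (t - s) ^ b) volume (t/2) t := by
    apply IntervalIntegrable.continuousOn_mul (f := fun s => (t - s) ^ b)
    · have base : IntervalIntegrable (fun x : ℝ => x ^ b) volume 0 (t/2) :=
        intervalIntegrable_rpow' hb
      have := base.comp_sub_left t
      have h2 : t - t/2 = t/2 := by ring
      rw [sub_zero, h2] at this
      exact this.symm
    · apply ContinuousOn.rpow_const (by fun_prop)
      intro x hx
      rw [uIcc_of_le (by linarith)] at hx
      left
      nlinarith [hx.1]
  exact h1.trans h2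

/-- Scaling identity. -/
lemma scale_kernel (ha : -1 < a) (hb : -1 < b) (t : ℝ) (ht : 0 < t) :
    (∫ s in (0:ℝ)..t, s ^ a * (t - s) ^ b)
      = t ^ (a + b + 1) * ∫ u in (0:ℝ)..1, u ^ a * (1 - u) ^ b := by
  have key := intervalIntegral.smul_integral_comp_mul_left
    (fun s => s ^ a * (t - s) ^ b) t (a := 0) (b := 1)
  simp only [mul_zero, mul_one] at key
  rw [← key]
  have congr1 : (∫ u in (0:ℝ)..1, (t * u) ^ a * (t - t * u) ^ b)
      = ∫ u in (0:ℝ)..1, t ^ (a + b) * (u ^ a * (1 - u) ^ b) := by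
    apply intervalIntegral.integral_congr
    intro u hu
    rw [uIcc_of_le zero_le_one] at hu
    have h1 : t - t * u = t * (1 - u) := by ring
    show (t * u) ^ a * (t - t * u) ^ b = t ^ (a + b) * (u ^ a * (1 - u) ^ b)
    rw [h1, Real.mul_rpow ht.le hu.1, Real.mul_rpow ht.le (by linarith [hu.2]),
      Real.rpow_add ht]
    ring
  rw [congr1, intervalIntegral.integral_const_mul]
  rw [smul_eq_mul, Real.rpow_add ht, Real.rpow_add ht, Real.rpow_one, Real.rpow_add ht]
  ring

/-- Diagonal value. -/
lemma Q_diag (ha : -1 < a) (hb : -1 < b) (hb0 : b < 0) (t : ℝ) (ht : 0 < t) :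
    Q a b t t = ((2 - 2 ^ b) / (1 - b)) * t ^ (a + b + 1)
      * ∫ u in (0:ℝ)..1, u ^ a * (1 - u) ^ b := by
  unfold Q
  rw [min_self]
  have congr1 : (∫ s in (0:ℝ)..t, s ^ a * ((t - s) ^ b + (t - s) ^ b - (t + t - 2 * s) ^ b))
      = ∫ s in (0:ℝ)..t, (2 - 2 ^ b) * (s ^ a * (t - s) ^ b) := by
    apply intervalIntegral.integral_congr
    intro s hs
    rw [uIcc_of_le ht.le] at hs
    show s ^ a * ((t - s) ^ b + (t - s) ^ b - (t + t - 2 * s) ^ b)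
      = (2 - 2 ^ b) * (s ^ a * (t - s) ^ b)
    have h1 : t + t - 2 * s = 2 * (t - s) := by ring
    rw [h1, Real.mul_rpow (by norm_num) (by linarith [hs.2])]
    ring
  rw [congr1, intervalIntegral.integral_const_mul, scale_kernel ha hb t ht]
  ring

/-- Lower bound for `Q a b 1 t`. -/
lemma Q_lb (ha : -1 < a) (hb : -1 < b) (hb0 : b < 0) (t : ℝ) (ht : 0 < t) (ht1 : t < 1) :
    (1 / (1 - b)) * t ^ (a + b + 1) * (∫ u in (0:ℝ)..1, u ^ a * (1 - u) ^ b)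
      ≤ Q a b 1 t := by
  unfold Q
  rw [min_eq_right ht1.le]
  have hmono : (∫ s in (0:ℝ)..t, s ^ a * (t - s) ^ b)
      ≤ ∫ s in (0:ℝ)..t, s ^ a * ((t - s) ^ b + (1 - s) ^ b - (1 + t - 2 * s) ^ b) := by
    apply intervalIntegral.integral_mono_on ht.le (int_kernel ha hb t ht)
    · -- integrability of the big integrand
      have hcont : ContinuousOn (fun s : ℝ => (1 - s) ^ b - (1 + t - 2 * s) ^ b) (uIcc 0 t) := by
        rw [uIcc_of_le ht.le]
        apply ContinuousOn.sub
        · apply ContinuousOn.rpow_const (by fun_prop)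
          intro x hx; left; have := hx.2; intro h; nlinarith [hx.1]
        · apply ContinuousOn.rpow_const (by fun_prop)
          intro x hx; left; have := hx.2; intro h; nlinarith [hx.1]
      have h2 : IntervalIntegrable
          (fun s => s ^ a * ((1 - s) ^ b - (1 + t - 2 * s) ^ b)) volume 0 t :=
        IntervalIntegrable.mul_continuousOn (intervalIntegrable_rpow' ha) hcont
      have h3 := (int_kernel ha hb t ht).add h2
      have heq : (fun s : ℝ => s ^ a * (t - s) ^ b + s ^ a * ((1 - s) ^ b - (1 + t - 2 * s) ^ b))
          = fun s : ℝ => s ^ a * ((t - s) ^ b + (1 - s) ^ b - (1 + t - 2 * s) ^ b) := by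
        funext s; ring
      rwa [heq] at h3
    · intro s hs
      have hs0 := hs.1
      have hst := hs.2
      have key : (1 + t - 2 * s) ^ b ≤ (1 - s) ^ b := by
        apply Real.rpow_le_rpow_of_nonpos (by linarith) (by linarith) hb0.le
      have hsa : 0 ≤ s ^ a := Real.rpow_nonneg hs0 a
      nlinarith [mul_le_mul_of_nonneg_left key hsa]
  have h1b : (0:ℝ) < 1 - b := by linarith
  have hpos : (0:ℝ) < 1 / (1 - b) := by positivity
  calc (1 / (1 - b)) * t ^ (a + b + 1) * (∫ u in (0:ℝ)..1, u ^ a * (1 - u) ^ b)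
      = (1 / (1 - b)) * ∫ s in (0:ℝ)..t, s ^ a * (t - s) ^ b := by
        rw [scale_kernel ha hb t ht]; ring
    _ ≤ _ := by
        apply mul_le_mul_of_nonneg_left hmono hpos.le

end Aux

theorem stmt5 (a b : ℝ) (ha : -1 < a) (hb : -1 < b) (hb0 : b < 0)
    (hab : a + b + 1 < 0) :
    ∃ t : ℝ, 0 < t ∧ t < 1 ∧
      Q a b 1 t > Real.sqrt (Q a b 1 1 * Q a b t t) := by
  set B : ℝ := ∫ u in (0:ℝ)..1, u ^ a * (1 - u) ^ b with hB
  have hBpos : 0 < B := by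
    apply intervalIntegral.intervalIntegral_pos_of_pos_on
      (int_kernel ha hb 1 one_pos) _ one_pos
    intro u hu
    exact mul_pos (Real.rpow_pos_of_pos hu.1 a) (Real.rpow_pos_of_pos (by linarith [hu.2]) b)
  set e : ℝ := a + b + 1 with he
  have hepos : e < 0 := hab
  have hene : e ≠ 0 := ne_of_lt hepos
  set t : ℝ := (2:ℝ) ^ (2 / e) with htdef
  have ht : 0 < t := Real.rpow_pos_of_pos two_pos _
  have ht1 : t < 1 :=
    Real.rpow_lt_one_of_one_lt_of_neg one_lt_two (div_neg_of_pos_of_neg two_pos hepos)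
  have hthalf : t ^ (e / 2) = 2 := by
    rw [htdef, ← Real.rpow_mul (by norm_num : (0:ℝ) ≤ 2),
      show (2 / e) * (e / 2) = 1 by field_simp, Real.rpow_one]
  have hte : t ^ e = 4 := by
    have h := Real.rpow_add ht (e / 2) (e / 2)
    rw [show e / 2 + e / 2 = e by ring, hthalf] at h
    rw [h]; norm_num
  set K : ℝ := (2 - 2 ^ b) / (1 - b) with hK
  have h1b : (0:ℝ) < 1 - b := by linarith
  have h2b : (0:ℝ) < 2 ^ b := Real.rpow_pos_of_pos two_pos b
  have h2b1 : (2:ℝ) ^ b < 2 := by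
    calc (2:ℝ) ^ b < 2 ^ (1:ℝ) := Real.rpow_lt_rpow_of_exponent_lt one_lt_two (by linarith)
    _ = 2 := Real.rpow_one 2
  have hKpos : 0 < K := div_pos (by linarith) h1b
  have hQ11 : Q a b 1 1 = K * B := by
    rw [Q_diag ha hb hb0 1 one_pos, ← he, Real.one_rpow]; ring
  have hQtt : Q a b t t = K * 4 * B := by
    rw [Q_diag ha hb hb0 t ht, ← he, hte]
  have hsqrt : Real.sqrt (Q a b 1 1 * Q a b t t) = 2 * K * B := by
    rw [hQ11, hQtt, show K * B * (K * 4 * B) = (2 * K * B) ^ 2 by ring]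
    exact Real.sqrt_sq (by positivity)
  refine ⟨t, ht, ht1, ?_⟩
  rw [hsqrt]
  have hlb := Q_lb ha hb hb0 t ht ht1
  rw [← he, hte, ← hB] at hlb
  have hfinal : 2 * K * B < 1 / (1 - b) * 4 * B := by
    rw [hK, show 2 * ((2 - 2 ^ b) / (1 - b)) * B = (2 * (2 - 2 ^ b) * B) / (1 - b) by ring,
      show 1 / (1 - b) * 4 * B = (4 * B) / (1 - b) by ring, div_lt_div_iff_of_pos_right h1b]
    nlinarith [mul_pos h2b hBpos]
  linarith
end

section
/- For a > -1 and -1 < b < 0 and all 0 < t < 1: Q_{a,b}(1,t) ≥ (t^{a+b+1}/(1-b)) ∫₀¹ u^a (1-u)^b du, because (1-u)^b ≥ (1+t-2u)^b for 0 ≤ u ≤ t when b < 0. -/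
open MeasureTheory intervalIntegral Real Filter

/-- Integrability of `s ^ a * (c - s) ^ b` on `[0, c]` for `a, b > -1`. -/
lemma beta_integrable {a b : ℝ} (ha : -1 < a) (hb : -1 < b) {c : ℝ} (hc : 0 < c) :
    IntervalIntegrable (fun s : ℝ => s ^ a * (c - s) ^ b) volume 0 c := by
  have hc2 : (0:ℝ) < c / 2 := by linarith
  have h1 : IntervalIntegrable (fun s : ℝ => s ^ a * (c - s) ^ b) volume 0 (c / 2) := by
    refine (intervalIntegrable_rpow' ha).mul_continuousOn ?_
    refine ContinuousOn.rpow_const (by fun_prop) ?_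
    intro x hx
    rw [Set.uIcc_of_le (by linarith)] at hx
    exact Or.inl (by intro h; have := hx.2; nlinarith)
  have h2 : IntervalIntegrable (fun s : ℝ => s ^ a * (c - s) ^ b) volume (c / 2) c := by
    have hbase : IntervalIntegrable (fun s : ℝ => (c - s) ^ b) volume (c / 2) c := by
      have h := ((intervalIntegrable_rpow' hb (a := 0) (b := c / 2)).comp_sub_left c).symm
      have e : c - c / 2 = c / 2 := by ring
      simpa [e] using h
    refine hbase.continuousOn_mul ?_
    refine ContinuousOn.rpow_const (by fun_prop) ?_
    intro x hx
    rw [Set.uIcc_of_le (by linarith)] at hx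
    exact Or.inl (by intro h; have := hx.1; nlinarith)
  exact h1.trans h2

theorem stmt6 (a b : ℝ) (ha : -1 < a) (hb : -1 < b) (hb0 : b < 0)
    (t : ℝ) (ht0 : 0 < t) (ht1 : t < 1) :
    Q a b 1 t ≥ (t ^ (a + b + 1) / (1 - b)) * ∫ u in (0:ℝ)..1, u ^ a * (1 - u) ^ b := by
  have hmin : min (1:ℝ) t = t := min_eq_right ht1.le
  have hone : (0:ℝ) < 1 - b := by linarith
  -- integrability of the lower bound function
  have hg : IntervalIntegrable (fun s : ℝ => s ^ a * (t - s) ^ b) volume 0 t :=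
    beta_integrable ha hb ht0
  -- integrability of the full integrand
  have hh1 : IntervalIntegrable (fun s : ℝ => s ^ a * (1 - s) ^ b) volume 0 t := by
    refine (intervalIntegrable_rpow' ha).mul_continuousOn ?_
    refine ContinuousOn.rpow_const (by fun_prop) ?_
    intro x hx
    rw [Set.uIcc_of_le ht0.le] at hx
    exact Or.inl (by intro h; have := hx.2; nlinarith)
  have hh2 : IntervalIntegrable (fun s : ℝ => s ^ a * (1 + t - 2 * s) ^ b) volume 0 t := by
    refine (intervalIntegrable_rpow' ha).mul_continuousOn ?_
    refine ContinuousOn.rpow_const (by fun_prop) ?_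
    intro x hx
    rw [Set.uIcc_of_le ht0.le] at hx
    exact Or.inl (by intro h; have := hx.2; nlinarith)
  have hfull : IntervalIntegrable
      (fun s : ℝ => s ^ a * ((t - s) ^ b + (1 - s) ^ b - (1 + t - 2 * s) ^ b)) volume 0 t := by
    have : (fun s : ℝ => s ^ a * ((t - s) ^ b + (1 - s) ^ b - (1 + t - 2 * s) ^ b))
        = fun s : ℝ => s ^ a * (t - s) ^ b + s ^ a * (1 - s) ^ b
            - s ^ a * (1 + t - 2 * s) ^ b := by
      funext s; ring
    rw [this]
    exact (hg.add hh1).sub hh2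
  -- pointwise comparison on [0, t]
  have hmono : (∫ s in (0:ℝ)..t, s ^ a * (t - s) ^ b)
      ≤ ∫ s in (0:ℝ)..t, s ^ a * ((t - s) ^ b + (1 - s) ^ b - (1 + t - 2 * s) ^ b) := by
    refine integral_mono_on ht0.le hg hfull ?_
    intro s hs
    have hs0 : 0 ≤ s := hs.1
    have hst : s ≤ t := hs.2
    have h1s : (0:ℝ) < 1 - s := by linarith
    have hle : (1 + t - 2 * s) ^ b ≤ (1 - s) ^ b :=
      Real.rpow_le_rpow_of_nonpos h1s (by linarith) hb0.le
    have hsa : 0 ≤ s ^ a := Real.rpow_nonneg hs0 a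
    nlinarith [mul_le_mul_of_nonneg_left hle hsa]
  -- the substitution s = t * u
  have hsubst : (∫ s in (0:ℝ)..t, s ^ a * (t - s) ^ b)
      = t ^ (a + b + 1) * ∫ u in (0:ℝ)..1, u ^ a * (1 - u) ^ b := by
    have h₁ : (∫ u in (0:ℝ)..1, (fun s : ℝ => s ^ a * (t - s) ^ b) (t * u))
        = t⁻¹ • ∫ s in (t * 0)..(t * 1), s ^ a * (t - s) ^ b :=
      integral_comp_mul_left (fun s : ℝ => s ^ a * (t - s) ^ b) ht0.ne'
    simp only [mul_zero, mul_one, smul_eq_mul] at h₁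
    have h₂ : (∫ u in (0:ℝ)..1, (t * u) ^ a * (t - t * u) ^ b)
        = ∫ u in (0:ℝ)..1, t ^ (a + b) * (u ^ a * (1 - u) ^ b) := by
      refine integral_congr ?_
      intro u hu
      rw [Set.uIcc_of_le (by norm_num)] at hu
      have hu0 : 0 ≤ u := hu.1
      have hu1 : u ≤ 1 := hu.2
      have e1 : (t * u) ^ a = t ^ a * u ^ a := Real.mul_rpow ht0.le hu0
      have e2 : t - t * u = t * (1 - u) := by ring
      have e3 : (t * (1 - u)) ^ b = t ^ b * (1 - u) ^ b :=
        Real.mul_rpow ht0.le (by linarith)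
      simp only [e1, e2, e3, Real.rpow_add ht0]
      ring
    rw [h₂, intervalIntegral.integral_const_mul] at h₁
    have : (∫ s in (0:ℝ)..t, s ^ a * (t - s) ^ b)
        = t * (t ^ (a + b) * ∫ u in (0:ℝ)..1, u ^ a * (1 - u) ^ b) := by
      rw [h₁]; field_simp
    rw [this, show a + b + 1 = (a + b) + 1 by ring, Real.rpow_add ht0 (a + b) 1,
      Real.rpow_one]
    ring
  -- put everything together
  rw [Q, hmin, ge_iff_le, div_mul_eq_mul_div, div_eq_mul_inv, div_eq_mul_inv,
    mul_comm (1:ℝ), mul_comm _ (1 - b)⁻¹, mul_one]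
  refine mul_le_mul_of_nonneg_left ?_ (by positivity)
  rw [← hsubst]
  exact hmono
end

section
/- For a > -1 and b > 2, for every t > 1 one has Q_{a,b}(1,t) = b ∫₀¹ ∫_u^t ∫_u^1 u^a (r+v-2u)^{b-2} dv dr du, and lim_{t→∞} Q_{a,b}(1,t)/t^{b-1} = (b/(b-1)) ∫₀¹ u^a (1-u) du. -/
open MeasureTheory intervalIntegral Real Filter

section Aux

open Topology

lemma ii_shift (p c x y : ℝ) (hp : -1 < p) :
    IntervalIntegrable (fun v : ℝ => (v + c) ^ p) volume x y := by
  simpa using (intervalIntegrable_rpow' (a := x + c) (b := y + c) hp).comp_add_right c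

lemma int_shift (p c x y : ℝ) (hp : -1 < p) :
    ∫ v in x..y, (v + c) ^ p = ((y + c) ^ (p + 1) - (x + c) ^ (p + 1)) / (p + 1) := by
  rw [intervalIntegral.integral_comp_add_right (fun s => s ^ p) c,
    integral_rpow (Or.inl hp)]

lemma rpow_mvt {b : ℝ} (hb : 1 ≤ b) {x y M : ℝ} (hx : 0 < x) (hxy : x ≤ y) (hyM : y ≤ M) :
    y ^ b - x ^ b ≤ b * M ^ (b - 1) * (y - x) := by
  have hb0 : 0 ≤ b := by linarith
  have key := Convex.norm_image_sub_le_of_norm_hasDerivWithin_le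
    (f := fun z : ℝ => z ^ b) (f' := fun z => b * z ^ (b - 1)) (s := Set.Icc x y)
    (C := b * M ^ (b - 1)) ?_ ?_ (convex_Icc x y) (Set.left_mem_Icc.2 hxy)
    (Set.right_mem_Icc.2 hxy)
  · have h1 : |y ^ b - x ^ b| ≤ b * M ^ (b - 1) * |y - x| := by
      simpa [Real.norm_eq_abs] using key
    have h2 : |y - x| = y - x := abs_of_nonneg (by linarith)
    calc y ^ b - x ^ b ≤ |y ^ b - x ^ b| := le_abs_self _
      _ ≤ b * M ^ (b - 1) * (y - x) := by rw [h2] at h1; exact h1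
  · intro z hz
    have hz0 : z ≠ 0 := (hx.trans_le hz.1).ne'
    exact ((Real.hasDerivAt_rpow_const (p := b) (Or.inl hz0)).hasDerivWithinAt).congr_deriv
      (by ring)
  · intro z hz
    have hz0 : 0 < z := hx.trans_le hz.1
    have hzM : z ≤ M := hz.2.trans hyM
    have : z ^ (b - 1) ≤ M ^ (b - 1) := Real.rpow_le_rpow hz0.le hzM (by linarith)
    show ‖b * z ^ (b - 1)‖ ≤ b * M ^ (b - 1)
    rw [Real.norm_eq_abs, abs_of_nonneg (by positivity)]
    have hbpos : 0 < b := by linarith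
    nlinarith [Real.rpow_nonneg hz0.le (b - 1)]

lemma inner1 (a b : ℝ) (hb : 2 < b) (u r : ℝ) :
    (∫ v in u..(1:ℝ), u ^ a * (r + v - 2 * u) ^ (b - 2))
      = u ^ a * (((r + 1 - 2 * u) ^ (b - 1) - (r - u) ^ (b - 1)) / (b - 1)) := by
  rw [intervalIntegral.integral_const_mul]
  congr 1
  have h : ∀ v : ℝ, r + v - 2 * u = v + (r - 2 * u) := fun v => by ring
  simp_rw [h]
  rw [int_shift (b - 2) (r - 2 * u) u 1 (by linarith)]
  have e1 : (1 : ℝ) + (r - 2 * u) = r + 1 - 2 * u := by ring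
  have e2 : u + (r - 2 * u) = r - u := by ring
  have e3 : b - 2 + 1 = b - 1 := by ring
  rw [e1, e2, e3]

lemma inner2 (a b : ℝ) (hb : 2 < b) (u t : ℝ) :
    (∫ r in u..t, u ^ a * (((r + 1 - 2 * u) ^ (b - 1) - (r - u) ^ (b - 1)) / (b - 1)))
      = u ^ a / (b * (b - 1)) * ((t + 1 - 2 * u) ^ b - (1 - u) ^ b - (t - u) ^ b) := by
  have hb0 : b ≠ 0 := by linarith
  have hb1 : b - 1 ≠ 0 := by linarith
  have h : ∀ r : ℝ, u ^ a * (((r + 1 - 2 * u) ^ (b - 1) - (r - u) ^ (b - 1)) / (b - 1))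
      = (u ^ a / (b - 1)) * ((r + (1 - 2 * u)) ^ (b - 1) - (r + (-u)) ^ (b - 1)) := by
    intro r
    have e1 : r + 1 - 2 * u = r + (1 - 2 * u) := by ring
    have e2 : r - u = r + (-u) := by ring
    rw [e1, e2]; ring
  simp_rw [h]
  rw [intervalIntegral.integral_const_mul,
    intervalIntegral.integral_sub (ii_shift _ _ _ _ (by linarith)) (ii_shift _ _ _ _ (by linarith)),
    int_shift _ _ _ _ (by linarith), int_shift _ _ _ _ (by linarith)]
  have e1 : t + (1 - 2 * u) = t + 1 - 2 * u := by ring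
  have e2 : u + (1 - 2 * u) = 1 - u := by ring
  have e3 : u + -u = (0:ℝ) := by ring
  have e4 : t + -u = t - u := by ring
  have e5 : b - 1 + 1 = b := by ring
  rw [e1, e2, e3, e4, e5, Real.zero_rpow hb0]
  set A := (t + 1 - 2 * u) ^ b
  set B := (1 - u) ^ b
  set C := (t - u) ^ b
  set U := u ^ a
  field_simp
  ring

lemma boundaux (a b : ℝ) (hb : 2 < b) {s t : ℝ} (hs0 : 0 < s) (hs1 : s ≤ 1) (ht : 2 ≤ t) :
    ‖s ^ a * ((t - s) ^ b + (1 - s) ^ b - (1 + t - 2 * s) ^ b) / t ^ (b - 1)‖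
      ≤ s ^ a * (1 + b * 2 ^ (b - 1)) := by
  have ht0 : (0:ℝ) < t := by linarith
  have hts : (0:ℝ) < t - s := by linarith
  have hC : t - s ≤ 1 + t - 2 * s := by linarith
  have hCM : 1 + t - 2 * s ≤ 2 * t := by linarith
  have hT : (1:ℝ) ≤ t ^ (b - 1) := Real.one_le_rpow (by linarith) (by linarith)
  have hTpos : (0:ℝ) < t ^ (b - 1) := by positivity
  set A := (t - s) ^ b with hA
  set B := (1 - s) ^ b with hB
  set C := (1 + t - 2 * s) ^ b with hCdef
  have hAC : A ≤ C := Real.rpow_le_rpow hts.le hC (by linarith)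
  have hB0 : 0 ≤ B := Real.rpow_nonneg (by linarith) b
  have hB1 : B ≤ 1 := Real.rpow_le_one (by linarith) (by linarith) (by linarith)
  have hmvt : C - A ≤ b * (2 * t) ^ (b - 1) * (1 - s) :=
    le_of_le_of_eq (rpow_mvt (by linarith) hts hC hCM) (by ring)
  have h2t : (2 * t) ^ (b - 1) = 2 ^ (b - 1) * t ^ (b - 1) :=
    Real.mul_rpow (by norm_num) ht0.le
  have habs : |A + B - C| ≤ 1 + b * 2 ^ (b - 1) * t ^ (b - 1) := by
    have h1 : b * (2 * t) ^ (b - 1) * (1 - s) ≤ b * 2 ^ (b - 1) * t ^ (b - 1) := by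
      rw [h2t]
      have hP : (0:ℝ) ≤ b * 2 ^ (b - 1) * t ^ (b - 1) :=
        mul_nonneg (mul_nonneg (by linarith) (Real.rpow_nonneg (by norm_num) _)) hTpos.le
      nlinarith [mul_nonneg hP hs0.le]
    rw [abs_le]
    constructor
    · nlinarith
    · nlinarith
  have hsa : (0:ℝ) ≤ s ^ a := Real.rpow_nonneg hs0.le a
  rw [Real.norm_eq_abs, abs_div, abs_mul, abs_of_nonneg hsa, abs_of_pos hTpos,
    mul_div_assoc]
  have hstep : |A + B - C| / t ^ (b - 1) ≤ 1 + b * 2 ^ (b - 1) := by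
    rw [div_le_iff₀ hTpos]
    have hb2 : (0:ℝ) ≤ b * 2 ^ (b - 1) :=
      mul_nonneg (by linarith) (Real.rpow_nonneg (by norm_num) _)
    nlinarith
  exact mul_le_mul_of_nonneg_left hstep hsa

lemma limaux (a b s : ℝ) (hb : 2 < b) (hs0 : 0 < s) (hs1 : s ≤ 1) :
    Tendsto (fun t : ℝ => s ^ a * ((t - s) ^ b + (1 - s) ^ b - (1 + t - 2 * s) ^ b) / t ^ (b - 1))
      atTop (𝓝 (-b * (s ^ a * (1 - s)))) := by
  set φ : ℝ → ℝ := fun x => (1 - s * x) ^ b - (1 + (1 - 2 * s) * x) ^ b with hφdef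
  have hφ0 : φ 0 = 0 := by simp [hφdef]
  have hd1 : HasDerivAt (fun x : ℝ => (1 - s * x) ^ b) (-s * b) 0 := by
    have h0 : HasDerivAt (fun x : ℝ => 1 - s * x) (-s) 0 := by
      simpa using ((hasDerivAt_id (0:ℝ)).const_mul s).const_sub 1
    have := h0.rpow_const (p := b) (by left; simp)
    simpa using this
  have hd2 : HasDerivAt (fun x : ℝ => (1 + (1 - 2 * s) * x) ^ b) ((1 - 2 * s) * b) 0 := by
    have h0 : HasDerivAt (fun x : ℝ => 1 + (1 - 2 * s) * x) (1 - 2 * s) 0 := by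
      simpa using ((hasDerivAt_id (0:ℝ)).const_mul (1 - 2 * s)).const_add 1
    have := h0.rpow_const (p := b) (by left; simp)
    simpa using this
  have hφ : HasDerivAt φ (-s * b - (1 - 2 * s) * b) 0 := hd1.sub hd2
  have hslope := hasDerivAt_iff_tendsto_slope.1 hφ
  have hinv : Tendsto (fun t : ℝ => 1 / t) atTop (𝓝[≠] (0:ℝ)) := by
    simpa [one_div] using tendsto_inv_atTop_nhdsGT_zero.mono_right
      (nhdsWithin_mono _ (t := ({0}ᶜ : Set ℝ)) fun x hx => ne_of_gt hx)
  have hslope_comp : Tendsto (fun t : ℝ => slope φ 0 (1 / t)) atTop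
      (𝓝 (-s * b - (1 - 2 * s) * b)) := hslope.comp hinv
  have hterm1 : Tendsto (fun t : ℝ => (1 - s) ^ b / t ^ (b - 1)) atTop (𝓝 0) := by
    have h := (tendsto_rpow_atTop (show 0 < b - 1 by linarith)).inv_tendsto_atTop
    have := h.const_mul ((1 - s) ^ b)
    simpa [div_eq_mul_inv] using this
  have key := (hterm1.add hslope_comp).const_mul (s ^ a)
  have hval : s ^ a * (0 + (-s * b - (1 - 2 * s) * b)) = -b * (s ^ a * (1 - s)) := by ring
  rw [hval] at key
  refine key.congr' ?_
  filter_upwards [eventually_ge_atTop (2:ℝ)] with t ht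
  have ht0 : (0:ℝ) < t := by linarith
  have hts : (0:ℝ) < t - s := by linarith
  have h1t : (0:ℝ) < 1 + t - 2 * s := by linarith
  have hx1 : (0:ℝ) ≤ 1 - s * (1 / t) := by
    have : 1 - s * (1 / t) = (t - s) / t := by field_simp
    rw [this]; positivity
  have hx2 : (0:ℝ) ≤ 1 + (1 - 2 * s) * (1 / t) := by
    have : 1 + (1 - 2 * s) * (1 / t) = (1 + t - 2 * s) / t := by field_simp; ring
    rw [this]; positivity
  have e1 : (t - s) ^ b = t ^ b * (1 - s * (1 / t)) ^ b := by
    rw [← Real.mul_rpow ht0.le hx1]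
    congr 1
    field_simp
  have e2 : (1 + t - 2 * s) ^ b = t ^ b * (1 + (1 - 2 * s) * (1 / t)) ^ b := by
    rw [← Real.mul_rpow ht0.le hx2]
    congr 1
    field_simp
    ring
  have e3 : t ^ b = t ^ (b - 1) * t := by
    rw [← Real.rpow_add_one ht0.ne' (b - 1)]
    norm_num
  have hTne : t ^ (b - 1) ≠ 0 := by positivity
  rw [slope_def_field, hφ0, hφdef]
  simp only []
  rw [e1, e2, e3]
  field_simp
  ring

end Aux

theorem stmt7 (a b : ℝ) (ha : -1 < a) (hb : 2 < b) :
    (∀ t : ℝ, 1 < t →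
      Q a b 1 t = b * ∫ u in (0:ℝ)..1, ∫ r in u..t, ∫ v in u..(1:ℝ),
        u ^ a * (r + v - 2 * u) ^ (b - 2)) ∧
    Tendsto (fun t : ℝ => Q a b 1 t / t ^ (b - 1)) atTop
      (nhds ((b / (b - 1)) * ∫ u in (0:ℝ)..1, u ^ a * (1 - u))) := by
  have hb0 : b ≠ 0 := by linarith
  have hb1 : b - 1 ≠ 0 := by linarith
  have h1b : (1:ℝ) - b ≠ 0 := by intro h; apply hb1; linarith
  constructor
  · intro t ht
    have hmin : min (1:ℝ) t = 1 := min_eq_left ht.le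
    simp_rw [inner1 a b hb, inner2 a b hb]
    have h : ∀ u : ℝ, u ^ a / (b * (b - 1)) * ((t + 1 - 2 * u) ^ b - (1 - u) ^ b - (t - u) ^ b)
        = (1 / (b * (b - 1))) * (-(u ^ a * ((t - u) ^ b + (1 - u) ^ b - (1 + t - 2 * u) ^ b))) := by
      intro u
      have e : t + 1 - 2 * u = 1 + t - 2 * u := by ring
      rw [e]; ring
    simp_rw [h]
    rw [intervalIntegral.integral_const_mul, intervalIntegral.integral_neg]
    simp only [Q, hmin]
    set I := ∫ s in (0:ℝ)..1, s ^ a * ((t - s) ^ b + (1 - s) ^ b - (1 + t - 2 * s) ^ b)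
    field_simp
    ring
  · set J := ∫ u in (0:ℝ)..1, u ^ a * (1 - u) with hJ
    have hmain : Tendsto
        (fun t : ℝ => ∫ s in (0:ℝ)..1,
          s ^ a * ((t - s) ^ b + (1 - s) ^ b - (1 + t - 2 * s) ^ b) / t ^ (b - 1))
        atTop (nhds (∫ s in (0:ℝ)..1, -b * (s ^ a * (1 - s)))) := by
      apply intervalIntegral.tendsto_integral_filter_of_dominated_convergence
        (bound := fun s => s ^ a * (1 + b * 2 ^ (b - 1)))
      · refine Eventually.of_forall fun t => ?_
        apply Measurable.aestronglyMeasurable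
        fun_prop
      · filter_upwards [eventually_ge_atTop (2:ℝ)] with t ht
        refine ae_of_all _ fun s hs => ?_
        rw [Set.uIoc_of_le (by norm_num : (0:ℝ) ≤ 1)] at hs
        exact boundaux a b hb hs.1 hs.2 ht
      · exact (intervalIntegrable_rpow' ha).mul_const _
      · refine ae_of_all _ fun s hs => ?_
        rw [Set.uIoc_of_le (by norm_num : (0:ℝ) ≤ 1)] at hs
        exact limaux a b s hb hs.1 hs.2
    have hlim_int : (∫ s in (0:ℝ)..1, -b * (s ^ a * (1 - s))) = -b * J :=
      intervalIntegral.integral_const_mul _ _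
    rw [hlim_int] at hmain
    have h2 := hmain.const_mul (1 / (1 - b))
    have hval : (b / (b - 1)) * J = (1 / (1 - b)) * (-b * J) := by
      field_simp
      ring
    rw [hval]
    refine h2.congr' ?_
    filter_upwards [eventually_gt_atTop (1:ℝ)] with t ht
    have hmin : min (1:ℝ) t = 1 := min_eq_left ht.le
    simp only [Q, hmin]
    rw [intervalIntegral.integral_div, mul_div_assoc]
end

section
/- For a > -1 and b > a + 3, Q_{a,b} is not a covariance function: since Q_{a,b}(1,t) grows like t^{b-1} as t → ∞ while sqrt(Q_{a,b}(1,1) Q_{a,b}(t,t)) grows like t^{(a+b+1)/2}, and b - 1 > (a+b+1)/2, the Cauchy–Schwarz inequality Q_{a,b}(1,t) ≤ sqrt(Q_{a,b}(1,1) Q_{a,b}(t,t)) fails for large t. -/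
open MeasureTheory intervalIntegral Real Filter

-- Bernoulli-type convexity inequality for rpow
lemma aux_bern {b y d : ℝ} (hb : 1 ≤ b) (hy : 0 < y) (hd : 0 ≤ d) :
    y ^ b + b * y ^ (b - 1) * d ≤ (y + d) ^ b := by
  have h2 : 1 + b * (d / y) ≤ (1 + d / y) ^ b :=
    one_add_mul_self_le_rpow_one_add (show (-1:ℝ) ≤ d / y by have h := div_nonneg hd hy.le; linarith) hb
  calc y ^ b + b * y ^ (b - 1) * d = y ^ b * (1 + b * (d / y)) := by
        rw [Real.rpow_sub hy, Real.rpow_one]; field_simp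
    _ ≤ y ^ b * (1 + d / y) ^ b :=
        mul_le_mul_of_nonneg_left h2 (Real.rpow_nonneg hy.le b)
    _ = (y + d) ^ b := by
        rw [← Real.mul_rpow hy.le (by positivity)]
        congr 1; field_simp

lemma aux_int {a : ℝ} (ha : -1 < a) {t : ℝ} {g : ℝ → ℝ}
    (hg : ContinuousOn g (Set.uIcc 0 t)) :
    IntervalIntegrable (fun s => s ^ a * g s) volume 0 t :=
  (intervalIntegral.intervalIntegrable_rpow' ha).mul_continuousOn hg

lemma aux_intC {a : ℝ} (ha : -1 < a) {t : ℝ} {g : ℝ → ℝ} (hg : Continuous g) :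
    IntervalIntegrable (fun s => s ^ a * g s) volume 0 t :=
  aux_int ha hg.continuousOn

lemma int_rpow_zero_to {a t : ℝ} (ha : -1 < a) (ht : 0 ≤ t) :
    ∫ s in (0:ℝ)..t, s ^ a = t ^ (a + 1) / (a + 1) := by
  rw [integral_rpow (Or.inl ha), Real.zero_rpow (by linarith)]
  ring

lemma Qtt_eq (a b : ℝ) (hb1 : 1 < b) {t : ℝ} (ht : 0 ≤ t) :
    Q a b t t = (2 ^ b - 2) / (b - 1) * ∫ s in (0:ℝ)..t, s ^ a * (t - s) ^ b := by
  have hcong : Set.EqOn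
      (fun s : ℝ => s ^ a * ((t - s) ^ b + (t - s) ^ b - (t + t - 2 * s) ^ b))
      (fun s : ℝ => (2 - 2 ^ b) * (s ^ a * (t - s) ^ b)) (Set.uIcc 0 t) := by
    intro s hs
    rw [Set.uIcc_of_le ht] at hs
    have hts : (0:ℝ) ≤ t - s := by linarith [hs.2]
    simp only
    rw [show t + t - 2 * s = 2 * (t - s) by ring, Real.mul_rpow (by norm_num) hts]
    ring
  rw [Q, min_self, intervalIntegral.integral_congr hcong,
    intervalIntegral.integral_const_mul]
  have h1 : (1:ℝ) - b ≠ 0 := by intro h; linarith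
  have h2 : b - 1 ≠ 0 := by intro h; linarith
  field_simp
  ring

lemma Qtt_nonneg (a b : ℝ) (ha : -1 < a) (hb1 : 1 < b) {t : ℝ} (ht : 0 ≤ t) :
    0 ≤ Q a b t t := by
  rw [Qtt_eq a b hb1 ht]
  have h2b : (2:ℝ) ≤ 2 ^ b := by
    calc (2:ℝ) = 2 ^ (1:ℝ) := (Real.rpow_one 2).symm
    _ ≤ 2 ^ b := Real.rpow_le_rpow_of_exponent_le (by norm_num) hb1.le
  have hI : 0 ≤ ∫ s in (0:ℝ)..t, s ^ a * (t - s) ^ b := by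
    apply intervalIntegral.integral_nonneg ht
    intro s hs
    exact mul_nonneg (Real.rpow_nonneg hs.1 a) (Real.rpow_nonneg (by linarith [hs.2]) b)
  have : (0:ℝ) ≤ (2 ^ b - 2) / (b - 1) := div_nonneg (by linarith) (by linarith)
  positivity

lemma Qtt_le (a b : ℝ) (ha : -1 < a) (hb1 : 1 < b) {t : ℝ} (ht : 0 < t) :
    Q a b t t ≤ (2 ^ b - 2) / ((b - 1) * (a + 1)) * t ^ (a + b + 1) := by
  have hb0 : (0:ℝ) ≤ b := by linarith
  have ha1 : (0:ℝ) < a + 1 := by linarith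
  have h2b : (2:ℝ) ≤ 2 ^ b := by
    calc (2:ℝ) = 2 ^ (1:ℝ) := (Real.rpow_one 2).symm
    _ ≤ 2 ^ b := Real.rpow_le_rpow_of_exponent_le (by norm_num) hb1.le
  rw [Qtt_eq a b hb1 ht.le]
  have hI : (∫ s in (0:ℝ)..t, s ^ a * (t - s) ^ b)
      ≤ ∫ s in (0:ℝ)..t, s ^ a * t ^ b := by
    apply intervalIntegral.integral_mono_on ht.le
    · exact aux_int ha (((continuous_const.sub continuous_id).rpow_const
        (fun x => Or.inr hb0)).continuousOn)
    · exact aux_intC ha continuous_const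
    · intro s hs
      exact mul_le_mul_of_nonneg_left
        (Real.rpow_le_rpow (by linarith [hs.2]) (by linarith [hs.1]) hb0)
        (Real.rpow_nonneg hs.1 a)
  have heval : (∫ s in (0:ℝ)..t, s ^ a * t ^ b) = t ^ (a + 1) / (a + 1) * t ^ b := by
    rw [intervalIntegral.integral_mul_const, int_rpow_zero_to ha ht.le]
  have hpow : t ^ (a + 1) * t ^ b = t ^ (a + b + 1) := by
    rw [← Real.rpow_add ht]; ring_nf
  calc (2 ^ b - 2) / (b - 1) * ∫ s in (0:ℝ)..t, s ^ a * (t - s) ^ b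
      ≤ (2 ^ b - 2) / (b - 1) * (t ^ (a + 1) / (a + 1) * t ^ b) := by
        apply mul_le_mul_of_nonneg_left (le_trans hI (le_of_eq heval))
          (div_nonneg (by linarith) (by linarith))
    _ = (2 ^ b - 2) / ((b - 1) * (a + 1)) * t ^ (a + b + 1) := by
        rw [← hpow]; field_simp

lemma Q1t_ge (a b : ℝ) (ha : -1 < a) (hb1 : 1 < b) {t : ℝ} (ht : 2 ≤ t) :
    (1 / (b - 1)) * (b * (t - 1) ^ (b - 1) * (1/(a+1) - 1/(a+2)) - 1/(a+1))
      ≤ Q a b 1 t := by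
  have hb0 : (0:ℝ) ≤ b := by linarith
  have ha1 : (0:ℝ) < a + 1 := by linarith
  have ha2 : (0:ℝ) < a + 2 := by linarith
  set c : ℝ := b * (t - 1) ^ (b - 1) with hc
  have key : Q a b 1 t = (1/(b-1)) *
      ∫ s in (0:ℝ)..1, s ^ a * ((1 + t - 2*s) ^ b - (t - s) ^ b - (1 - s) ^ b) := by
    have hneg : (∫ s in (0:ℝ)..1, s ^ a * ((1 + t - 2*s) ^ b - (t - s) ^ b - (1 - s) ^ b))
        = - ∫ s in (0:ℝ)..1, s ^ a * ((t - s) ^ b + (1 - s) ^ b - (1 + t - 2 * s) ^ b) := by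
      rw [← intervalIntegral.integral_neg]
      congr 1; funext s; ring
    rw [Q, min_eq_left (by linarith), hneg]
    have h1 : (1:ℝ) - b ≠ 0 := by intro h; linarith
    have h2 : b - 1 ≠ 0 := by intro h; linarith
    field_simp
    ring
  -- pointwise lower bound on the integrand
  have hmono : (∫ s in (0:ℝ)..1, s ^ a * (c * (1 - s) - 1))
      ≤ ∫ s in (0:ℝ)..1, s ^ a * ((1 + t - 2*s) ^ b - (t - s) ^ b - (1 - s) ^ b) := by
    apply intervalIntegral.integral_mono_on (by norm_num)
    · exact aux_intC ha (by continuity)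
    · refine aux_int ha ?_
      have c1 : Continuous fun s : ℝ => (1 + t - 2*s) ^ b :=
        (by continuity : Continuous fun s : ℝ => 1 + t - 2*s).rpow_const fun _ => Or.inr hb0
      have c2 : Continuous fun s : ℝ => (t - s) ^ b :=
        (by continuity : Continuous fun s : ℝ => t - s).rpow_const fun _ => Or.inr hb0
      have c3 : Continuous fun s : ℝ => (1 - s) ^ b :=
        (by continuity : Continuous fun s : ℝ => 1 - s).rpow_const fun _ => Or.inr hb0
      exact ((c1.sub c2).sub c3).continuousOn
    · intro s hs
      obtain ⟨hs0, hs1⟩ := hs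
      have h1 : (t - s) ^ b + b * (t - s) ^ (b - 1) * (1 - s) ≤ (1 + t - 2*s) ^ b := by
        have hB := aux_bern hb1.le (show (0:ℝ) < t - s by linarith)
          (show (0:ℝ) ≤ 1 - s by linarith)
        rwa [show (t - s) + (1 - s) = 1 + t - 2*s by ring] at hB
      have h2 : (t - 1) ^ (b-1) ≤ (t - s) ^ (b-1) :=
        Real.rpow_le_rpow (by linarith) (by linarith) (by linarith)
      have h3 : (1 - s) ^ b ≤ 1 := Real.rpow_le_one (by linarith) (by linarith) hb0
      have h4 : c * (1 - s) ≤ b * (t - s) ^ (b-1) * (1 - s) :=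
        mul_le_mul_of_nonneg_right (mul_le_mul_of_nonneg_left h2 hb0) (by linarith)
      exact mul_le_mul_of_nonneg_left (by linarith) (Real.rpow_nonneg hs0 a)
  -- evaluate the lower integral
  have heval : (∫ s in (0:ℝ)..1, s ^ a * (c * (1 - s) - 1))
      = c * (1/(a+1) - 1/(a+2)) - 1/(a+1) := by
    have hEq : Set.EqOn (fun s : ℝ => s ^ a * (c * (1 - s) - 1))
        (fun s : ℝ => c * s ^ a - c * s ^ (a+1) - s ^ a) (Set.uIcc 0 1) := by
      intro s _
      rcases eq_or_ne s 0 with rfl | hsne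
      · rcases eq_or_ne a 0 with rfl | haz
        · norm_num
        · simp only
          rw [Real.zero_rpow haz, Real.zero_rpow (show a + 1 ≠ 0 by intro h; linarith)]
          ring
      · simp only
        rw [Real.rpow_add_one hsne]
        ring
    have i1 : IntervalIntegrable (fun s : ℝ => c * s ^ a) volume 0 1 :=
      (intervalIntegral.intervalIntegrable_rpow' ha).const_mul c
    have i2 : IntervalIntegrable (fun s : ℝ => c * s ^ (a+1)) volume 0 1 :=
      (intervalIntegral.intervalIntegrable_rpow' (by linarith)).const_mul c
    have i3 : IntervalIntegrable (fun s : ℝ => s ^ a) volume 0 1 :=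
      intervalIntegral.intervalIntegrable_rpow' ha
    rw [intervalIntegral.integral_congr hEq, intervalIntegral.integral_sub (i1.sub i2) i3,
      intervalIntegral.integral_sub i1 i2, intervalIntegral.integral_const_mul,
      intervalIntegral.integral_const_mul, int_rpow_zero_to ha zero_le_one,
      int_rpow_zero_to (by linarith : (-1:ℝ) < a + 1) zero_le_one]
    rw [Real.one_rpow, Real.one_rpow]
    ring_nf
  rw [key]
  have hbp : (0:ℝ) ≤ 1 / (b - 1) := by
    have h : (0:ℝ) < b - 1 := by linarith
    positivity
  exact mul_le_mul_of_nonneg_left (heval ▸ hmono) hbp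

theorem stmt8 (a b : ℝ) (ha : -1 < a) (hb : a + 3 < b) :
    ∀ᶠ t in atTop, Q a b 1 t > Real.sqrt (Q a b 1 1 * Q a b t t) := by
  have hb1 : 1 < b := by linarith
  have ha1 : (0:ℝ) < a + 1 := by linarith
  have ha2 : (0:ℝ) < a + 2 := by linarith
  have hbm : (0:ℝ) < b - 1 := by linarith
  set K : ℝ := 1/(a+1) - 1/(a+2) with hK
  have hKpos : 0 < K := by
    rw [hK, div_sub_div _ _ (ne_of_gt ha1) (ne_of_gt ha2)]
    have h : 1 * (a + 2) - (a + 1) * 1 = 1 := by ring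
    rw [h]
    positivity
  set C : ℝ := (2 ^ b - 2) / ((b - 1) * (a + 1)) with hC
  have h2b : (2:ℝ) ≤ 2 ^ b := by
    calc (2:ℝ) = 2 ^ (1:ℝ) := (Real.rpow_one 2).symm
    _ ≤ 2 ^ b := Real.rpow_le_rpow_of_exponent_le (by norm_num) hb1.le
  have hC0 : 0 ≤ C := div_nonneg (by linarith) (by positivity)
  set p : ℝ := b - 1 with hp
  set q : ℝ := (a + b + 1)/2 with hq
  have hq0 : 0 < q := by rw [hq]; linarith
  have hpq : 0 < p - q := by rw [hp, hq]; linarith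
  set c1 : ℝ := b * K / (b - 1) with hc1
  have hc1p : 0 < c1 := by rw [hc1]; positivity
  set c2 : ℝ := c1 / 2 ^ p with hc2
  have h2p : (0:ℝ) < 2 ^ p := Real.rpow_pos_of_pos (by norm_num) p
  have hc2p : 0 < c2 := by rw [hc2]; positivity
  set c0 : ℝ := 1 / ((b - 1) * (a + 1)) with hc0
  -- tendsto
  have htend : Tendsto (fun t : ℝ => c2 * t ^ p - C * t ^ q - c0) atTop atTop := by
    have hA : Tendsto (fun t : ℝ => t ^ q * (c2 * t ^ (p - q) - C) - c0) atTop atTop := by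
      apply tendsto_atTop_add_const_right
      apply Tendsto.atTop_mul_atTop₀ (tendsto_rpow_atTop hq0)
      have := (tendsto_rpow_atTop hpq).const_mul_atTop hc2p
      exact tendsto_atTop_add_const_right _ (-C) this
    apply hA.congr'
    filter_upwards [eventually_gt_atTop (0:ℝ)] with t ht0
    have : t ^ q * t ^ (p - q) = t ^ p := by
      rw [← Real.rpow_add ht0]; ring_nf
    simp only [mul_sub, mul_comm (t ^ q) (c2 * t ^ (p - q))]
    rw [mul_assoc, mul_comm (t ^ (p-q)) (t ^ q), this]
    ring
  filter_upwards [eventually_ge_atTop (2:ℝ), htend.eventually_gt_atTop 0] with t ht2 hGt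
  have ht0 : (0:ℝ) < t := by linarith
  -- upper bound on the sqrt
  have h11 : Q a b 1 1 ≤ C := by
    have h := Qtt_le a b ha hb1 one_pos
    rwa [Real.one_rpow, mul_one] at h
  have htt := Qtt_le a b ha hb1 ht0
  have hprod : Q a b 1 1 * Q a b t t ≤ C * (C * t ^ (a + b + 1)) :=
    mul_le_mul h11 htt (Qtt_nonneg a b ha hb1 ht0.le) hC0
  have hsq : Real.sqrt (Q a b 1 1 * Q a b t t) ≤ C * t ^ q := by
    have e1 : (C * t ^ q)^2 = C * (C * t ^ (a + b + 1)) := by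
      have hqq : q + q = a + b + 1 := by rw [hq]; ring
      rw [pow_two, ← hqq, Real.rpow_add ht0]; ring
    calc Real.sqrt (Q a b 1 1 * Q a b t t)
        ≤ Real.sqrt (C * (C * t ^ (a + b + 1))) := Real.sqrt_le_sqrt hprod
      _ = C * t ^ q := by
          rw [← e1, Real.sqrt_sq (by positivity)]
  -- lower bound on Q a b 1 t
  have hlow := Q1t_ge a b ha hb1 ht2
  have hlow' : c1 * (t - 1) ^ p - c0 ≤ Q a b 1 t := by
    refine le_trans (le_of_eq ?_) hlow
    rw [hc1, hc0, hp, ← hK]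
    field_simp
  have hhalf : t / 2 ≤ t - 1 := by linarith
  have hlow2 : c2 * t ^ p - c0 ≤ c1 * (t - 1) ^ p - c0 := by
    have h1 : (t/2) ^ p ≤ (t - 1) ^ p :=
      Real.rpow_le_rpow (by positivity) hhalf (by linarith)
    have h2 : (t/2) ^ p = t ^ p / 2 ^ p := Real.div_rpow ht0.le (by norm_num) p
    have : c2 * t ^ p = c1 * (t/2) ^ p := by
      rw [h2, hc2]; field_simp
    nlinarith [mul_le_mul_of_nonneg_left h1 hc1p.le]
  calc Real.sqrt (Q a b 1 1 * Q a b t t) ≤ C * t ^ q := hsq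
    _ < c2 * t ^ p - c0 := by linarith
    _ ≤ Q a b 1 t := le_trans hlow2 hlow'
end

section
/- Suppose -1 < a ≤ 0, b ∈ (0,1) ∪ (1,2], and 0 < a+b+1 ≤ 2. For any M > 0 there is a constant κ > 0 such that for all 0 ≤ s ≤ t ≤ M with t - s ≤ 1, the increment variance satisfies Q_{a,b}(t,t) + Q_{a,b}(s,s) - 2Q_{a,b}(s,t) ≤ κ (t-s)^b. -/
open MeasureTheory intervalIntegral Real Filter

/-- Subadditivity of `x ^ θ` for `0 ≤ θ ≤ 1`. -/
lemma rpow_subadd {x y θ : ℝ} (hx : 0 ≤ x) (hy : 0 ≤ y) (hθ0 : 0 ≤ θ) (hθ1 : θ ≤ 1) :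
    (x + y) ^ θ ≤ x ^ θ + y ^ θ := by
  lift x to NNReal using hx
  lift y to NNReal using hy
  have := NNReal.rpow_add_le_add_rpow x y hθ0 hθ1
  exact_mod_cast this

/-- Second-difference bound for `x ^ b` when `1 < b ≤ 2`. -/
lemma rpow_secdiff {b m δ : ℝ} (hb1 : 1 < b) (hb2 : b ≤ 2) (hδ : 0 ≤ δ) (hm : δ ≤ m) :
    (m + δ) ^ b + (m - δ) ^ b - 2 * m ^ b ≤ 2 * δ ^ b := by
  have hbr : (-1 : ℝ) < b - 1 := by linarith
  have hb0 : (0:ℝ) < b := by linarith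
  have h1 : ∫ z in m..(m+δ), z ^ (b-1) = ((m+δ) ^ b - m ^ b) / b := by
    rw [integral_rpow (Or.inl hbr)]; norm_num
  have h2 : ∫ z in (m-δ)..m, z ^ (b-1) = (m ^ b - (m-δ) ^ b) / b := by
    rw [integral_rpow (Or.inl hbr)]; norm_num
  have h3 : ∫ z in m..(m+δ), (z - δ) ^ (b-1) = ∫ z in (m-δ)..m, z ^ (b-1) := by
    rw [integral_comp_sub_right (fun z => z ^ (b-1)) δ]
    norm_num
  have hcont : Continuous fun z : ℝ => z ^ (b-1) := by
    apply continuous_iff_continuousAt.2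
    intro x
    exact Real.continuousAt_rpow_const x (b-1) (Or.inr (by linarith))
  have hint1 : IntervalIntegrable (fun z : ℝ => z ^ (b-1)) volume m (m+δ) :=
    hcont.intervalIntegrable _ _
  have hint2 : IntervalIntegrable (fun z : ℝ => (z - δ) ^ (b-1)) volume m (m+δ) :=
    (hcont.comp (continuous_id.sub continuous_const)).intervalIntegrable _ _
  have hmono : ∫ z in m..(m+δ), (z ^ (b-1) - (z - δ) ^ (b-1)) ≤
      ∫ z in m..(m+δ), δ ^ (b-1) := by
    apply integral_mono_on (by linarith) (hint1.sub hint2) (intervalIntegrable_const)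
    intro z hz
    have hz1 : m ≤ z := hz.1
    have : z ^ (b-1) ≤ (z - δ) ^ (b-1) + δ ^ (b-1) := by
      have := rpow_subadd (x := z - δ) (y := δ) (θ := b-1)
        (by linarith) hδ (by linarith) (by linarith)
      calc z ^ (b-1) = (z - δ + δ) ^ (b-1) := by ring_nf
        _ ≤ (z - δ) ^ (b-1) + δ ^ (b-1) := this
    linarith
  rw [intervalIntegral.integral_sub hint1 hint2, h3, h1, h2,
    intervalIntegral.integral_const] at hmono
  have hδb : δ * δ ^ (b-1) = δ ^ b := by
    rw [← Real.rpow_one_add' hδ (by linarith : 1 + (b-1) ≠ 0)]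
    norm_num
  have hδbnn : 0 ≤ δ ^ b := Real.rpow_nonneg hδ b
  have : ((m+δ) ^ b - m ^ b) / b - (m ^ b - (m-δ) ^ b) / b ≤ δ ^ b := by
    calc ((m+δ) ^ b - m ^ b) / b - (m ^ b - (m-δ) ^ b) / b ≤ (m + δ - m) • δ ^ (b-1) := hmono
      _ = δ * δ ^ (b-1) := by rw [smul_eq_mul]; ring_nf
      _ = δ ^ b := hδb
  have hbb : (m+δ) ^ b + (m-δ) ^ b - 2 * m ^ b ≤ b * δ ^ b := by
    have h4 := mul_le_mul_of_nonneg_left this (le_of_lt hb0)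
    field_simp at h4
    linarith
  nlinarith

/-- Key pointwise estimate. -/
lemma key_pointwise {b m δ : ℝ} (hb : (0 < b ∧ b < 1) ∨ (1 < b ∧ b ≤ 2))
    (hδ : 0 ≤ δ) (hm : δ ≤ m) :
    (1/(1-b)) * (2 * m ^ b - (m + δ) ^ b - (m - δ) ^ b) ≤ 2 * |1/(1-b)| * δ ^ b := by
  have hδb : 0 ≤ δ ^ b := Real.rpow_nonneg hδ b
  rcases hb with ⟨hb0, hb1⟩ | ⟨hb1, hb2⟩
  · have hc : 0 < 1/(1-b) := by
      apply div_pos one_pos; linarith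
    rw [abs_of_pos hc]
    have h1 : m ^ b ≤ (m+δ) ^ b :=
      Real.rpow_le_rpow (by linarith) (by linarith) (le_of_lt hb0)
    have h2 : m ^ b ≤ (m-δ) ^ b + δ ^ b := by
      have := rpow_subadd (x := m-δ) (y := δ) (θ := b) (by linarith) hδ hb0.le hb1.le
      calc m ^ b = (m - δ + δ) ^ b := by ring_nf
        _ ≤ (m-δ) ^ b + δ ^ b := this
    have hX : 2 * m ^ b - (m + δ) ^ b - (m - δ) ^ b ≤ 2 * δ ^ b := by linarith
    calc (1/(1-b)) * (2 * m ^ b - (m + δ) ^ b - (m - δ) ^ b)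
        ≤ (1/(1-b)) * (2 * δ ^ b) := mul_le_mul_of_nonneg_left hX hc.le
      _ = 2 * (1/(1-b)) * δ ^ b := by ring
  · have hc : 1/(1-b) < 0 := by
      apply div_neg_of_pos_of_neg one_pos; linarith
    rw [abs_of_neg hc]
    have hsd := rpow_secdiff hb1 hb2 hδ hm
    have := mul_le_mul_of_nonneg_left hsd (by linarith : (0:ℝ) ≤ -(1/(1-b)))
    nlinarith [this]

/-- The common integrand. -/
noncomputable def Qf (a b w z u : ℝ) : ℝ :=
  u ^ a * ((z - u) ^ b + (w - u) ^ b - (w + z - 2 * u) ^ b)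

lemma Q_eq (a b w z : ℝ) :
    Q a b w z = (1 / (1 - b)) * ∫ u in (0:ℝ)..(min w z), Qf a b w z u := by
  simp only [Q, Qf]

set_option maxHeartbeats 1000000 in
theorem stmt11 (a b : ℝ) (ha : -1 < a) (ha0 : a ≤ 0)
    (hb : (0 < b ∧ b < 1) ∨ (1 < b ∧ b ≤ 2))
    (hab0 : 0 < a + b + 1) (hab2 : a + b + 1 ≤ 2)
    (M : ℝ) (hM : 0 < M) :
    ∃ κ : ℝ, 0 < κ ∧ ∀ s t : ℝ, 0 ≤ s → s ≤ t → t ≤ M → t - s ≤ 1 →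
      Q a b t t + Q a b s s - 2 * Q a b s t ≤ κ * (t - s) ^ b := by
  have hb0 : 0 < b := by rcases hb with ⟨h, _⟩ | ⟨h, _⟩ <;> linarith
  have ha1 : 0 < a + 1 := by linarith
  set c : ℝ := 1 / (1 - b) with hc_def
  set Ma : ℝ := (max M 1) ^ (a+1) with hMa_def
  set K1 : ℝ := |c| * (2 + 2 ^ b) with hK1_def
  have hK1nn : 0 ≤ K1 := by
    apply mul_nonneg (abs_nonneg _)
    have : (0:ℝ) ≤ (2:ℝ) ^ b := Real.rpow_nonneg (by norm_num) b
    linarith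
  have hMann : 0 ≤ Ma := Real.rpow_nonneg (le_max_of_le_right zero_le_one) _
  have hcabs : 0 ≤ |c| := abs_nonneg _
  refine ⟨(K1 + 2 * |c| * Ma + 1) / (a + 1), ?_, ?_⟩
  · apply div_pos _ ha1
    nlinarith
  intro s t hs0 hst htM hts1
  have ht0 : 0 ≤ t := hs0.trans hst
  have hδ0 : 0 ≤ t - s := by linarith
  have hδb : 0 ≤ (t - s) ^ b := Real.rpow_nonneg hδ0 b
  -- continuity of the smooth parts
  have hcontb : Continuous fun x : ℝ => x ^ b := by
    apply continuous_iff_continuousAt.2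
    intro x
    exact Real.continuousAt_rpow_const x b (Or.inr hb0.le)
  have hintf : ∀ w z p q : ℝ, IntervalIntegrable (Qf a b w z) volume p q := by
    intro w z p q
    apply (intervalIntegrable_rpow' ha).mul_continuousOn
    apply Continuous.continuousOn
    exact ((hcontb.comp (continuous_const.sub continuous_id)).add
      (hcontb.comp (continuous_const.sub continuous_id))).sub
      (hcontb.comp (continuous_const.sub (continuous_const.mul continuous_id)))
  -- rewrite the goal as two integrals
  have hgoal : Q a b t t + Q a b s s - 2 * Q a b s t
      = (∫ u in s..t, c * Qf a b t t u)
        + ∫ u in (0:ℝ)..s, (c * Qf a b t t u + c * Qf a b s s u - 2 * (c * Qf a b s t u)) := by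
    rw [Q_eq a b t t, Q_eq a b s s, Q_eq a b s t, min_self, min_self, min_eq_left hst]
    rw [← integral_add_adjacent_intervals (hintf t t 0 s) (hintf t t s t)]
    rw [intervalIntegral.integral_sub
        (((hintf t t 0 s).const_mul c).add ((hintf s s 0 s).const_mul c))
        (((hintf s t 0 s).const_mul c).const_mul 2),
      intervalIntegral.integral_add ((hintf t t 0 s).const_mul c) ((hintf s s 0 s).const_mul c)]
    simp only [intervalIntegral.integral_const_mul]
    ring
  rw [hgoal]
  -- bound the first integral
  have hA : (∫ u in s..t, c * Qf a b t t u)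
      ≤ ∫ u in s..t, u ^ a * (K1 * (t - s) ^ b) := by
    apply integral_mono_on hst ((hintf t t s t).const_mul c)
      ((intervalIntegrable_rpow' ha).mul_const _)
    intro u hu
    have hu1 : s ≤ u := hu.1
    have hu2 : u ≤ t := hu.2
    have hu0 : 0 ≤ u := hs0.trans hu1
    have htu : 0 ≤ t - u := by linarith
    have e1 : t + t - 2 * u = 2 * (t - u) := by ring
    have e2 : (2 * (t - u)) ^ b = 2 ^ b * (t - u) ^ b :=
      Real.mul_rpow (by norm_num) htu
    have h3 : (c * (2 - 2 ^ b)) * (t - u) ^ b ≤ K1 * (t - s) ^ b := by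
      have hb2 : (0:ℝ) ≤ (2:ℝ) ^ b := Real.rpow_nonneg (by norm_num) b
      have habs : c * (2 - 2 ^ b) ≤ K1 := by
        calc c * (2 - 2 ^ b) ≤ |c * (2 - 2 ^ b)| := le_abs_self _
          _ = |c| * |2 - 2 ^ b| := abs_mul _ _
          _ ≤ |c| * (2 + 2 ^ b) := by
              apply mul_le_mul_of_nonneg_left _ hcabs
              rw [abs_le]; constructor <;> nlinarith
          _ = K1 := rfl
      have htub : (t - u) ^ b ≤ (t - s) ^ b :=
        Real.rpow_le_rpow htu (by linarith) hb0.le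
      have htubnn : 0 ≤ (t - u) ^ b := Real.rpow_nonneg htu b
      nlinarith
    calc c * Qf a b t t u
        = u ^ a * ((c * (2 - 2 ^ b)) * (t - u) ^ b) := by
          simp only [Qf]; rw [e1, e2]; ring
      _ ≤ u ^ a * (K1 * (t - s) ^ b) :=
          mul_le_mul_of_nonneg_left h3 (Real.rpow_nonneg hu0 a)
  -- bound the second integral
  have hB : (∫ u in (0:ℝ)..s, (c * Qf a b t t u + c * Qf a b s s u - 2 * (c * Qf a b s t u)))
      ≤ ∫ u in (0:ℝ)..s, u ^ a * (2 * |c| * (t - s) ^ b) := by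
    apply integral_mono_on hs0
      ((((hintf t t 0 s).const_mul c).add ((hintf s s 0 s).const_mul c)).sub
        (((hintf s t 0 s).const_mul c).const_mul 2))
      ((intervalIntegrable_rpow' ha).mul_const _)
    intro u hu
    have hu1 : 0 ≤ u := hu.1
    have hu2 : u ≤ s := hu.2
    have e1 : t + t - 2 * u = (t + s - 2 * u) + (t - s) := by ring
    have e2 : s + s - 2 * u = (t + s - 2 * u) - (t - s) := by ring
    have e3 : s + t - 2 * u = t + s - 2 * u := by ring
    have hkey := key_pointwise (m := t + s - 2 * u) (δ := t - s) hb hδ0 (by linarith)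
    calc c * Qf a b t t u + c * Qf a b s s u - 2 * (c * Qf a b s t u)
        = u ^ a * ((1/(1-b)) * (2 * (t + s - 2*u) ^ b
            - ((t + s - 2*u) + (t - s)) ^ b - ((t + s - 2*u) - (t - s)) ^ b)) := by
          simp only [Qf]; rw [e1, e2, e3]; ring
      _ ≤ u ^ a * (2 * |1/(1-b)| * (t - s) ^ b) :=
          mul_le_mul_of_nonneg_left hkey (Real.rpow_nonneg hu1 a)
      _ = u ^ a * (2 * |c| * (t - s) ^ b) := by rw [← hc_def]
  -- compute the majorant integrals
  have hIa : ∫ u in s..t, u ^ a * (K1 * (t - s) ^ b)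
      = (t ^ (a+1) - s ^ (a+1)) / (a+1) * (K1 * (t - s) ^ b) := by
    rw [intervalIntegral.integral_mul_const, integral_rpow (Or.inl ha)]
  have hIb : ∫ u in (0:ℝ)..s, u ^ a * (2 * |c| * (t - s) ^ b)
      = s ^ (a+1) / (a+1) * (2 * |c| * (t - s) ^ b) := by
    rw [intervalIntegral.integral_mul_const, integral_rpow (Or.inl ha),
      Real.zero_rpow (by linarith : a + 1 ≠ 0)]
    ring_nf
  rw [hIa] at hA
  rw [hIb] at hB
  -- final numeric bounds
  have hP1 : t ^ (a+1) - s ^ (a+1) ≤ 1 := by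
    have hsub : t ^ (a+1) ≤ s ^ (a+1) + (t - s) ^ (a+1) := by
      have := rpow_subadd (x := s) (y := t - s) (θ := a+1) hs0 hδ0 ha1.le (by linarith)
      calc t ^ (a+1) = (s + (t - s)) ^ (a+1) := by ring_nf
        _ ≤ s ^ (a+1) + (t - s) ^ (a+1) := this
    have hle1 : (t - s) ^ (a+1) ≤ 1 := Real.rpow_le_one hδ0 hts1 ha1.le
    linarith
  have hP0 : 0 ≤ t ^ (a+1) - s ^ (a+1) := by
    have := Real.rpow_le_rpow hs0 hst ha1.le
    linarith
  have hsMa : s ^ (a+1) ≤ Ma := by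
    apply Real.rpow_le_rpow hs0 _ ha1.le
    exact le_trans (hst.trans htM) (le_max_left M 1)
  have hsnn : 0 ≤ s ^ (a+1) := Real.rpow_nonneg hs0 _
  have hKδ : 0 ≤ K1 * (t - s) ^ b := mul_nonneg hK1nn hδb
  have hcδ : 0 ≤ 2 * |c| * (t - s) ^ b := by positivity
  have hA' : (t ^ (a+1) - s ^ (a+1)) / (a+1) * (K1 * (t - s) ^ b)
      ≤ 1 / (a+1) * (K1 * (t - s) ^ b) := by
    apply mul_le_mul_of_nonneg_right _ hKδ
    exact div_le_div_of_nonneg_right hP1 ha1.le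
  have hB' : s ^ (a+1) / (a+1) * (2 * |c| * (t - s) ^ b)
      ≤ Ma / (a+1) * (2 * |c| * (t - s) ^ b) := by
    apply mul_le_mul_of_nonneg_right _ hcδ
    exact div_le_div_of_nonneg_right hsMa ha1.le
  have hfin : 1 / (a+1) * (K1 * (t - s) ^ b) + Ma / (a+1) * (2 * |c| * (t - s) ^ b)
      ≤ (K1 + 2 * |c| * Ma + 1) / (a+1) * (t - s) ^ b := by
    have e : 1 / (a+1) * (K1 * (t - s) ^ b) + Ma / (a+1) * (2 * |c| * (t - s) ^ b)
        = ((K1 + 2 * |c| * Ma) * (t - s) ^ b) / (a+1) := by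
      field_simp
    rw [e, div_mul_eq_mul_div]
    exact div_le_div_of_nonneg_right
      (mul_le_mul_of_nonneg_right (le_add_of_nonneg_right zero_le_one) hδb) ha1.le
  exact (add_le_add (hA.trans hA') (hB.trans hB')).trans hfin
end

section
/- Let 1 < b ≤ 2 and -1 < a ≤ 0. For 0 ≤ s ≤ t and u ∈ [0,s], the function r_{t,s}(u) = 2^b(t-u)^b + 2^b(s-u)^b - 2(t+s-2u)^b is nondecreasing in u and satisfies r_{t,s}(u) ≤ (2^b - 2)(t-s)^b. -/
open MeasureTheory intervalIntegral Real Filter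

private lemma midpoint_concave {p x y : ℝ} (hp0 : 0 < p) (hp1 : p ≤ 1)
    (hx : 0 ≤ x) (hy : 0 ≤ y) : x ^ p + y ^ p ≤ 2 * ((x + y) / 2) ^ p := by
  have h := (Real.concaveOn_rpow hp0.le hp1).2 (Set.mem_Ici.2 hx) (Set.mem_Ici.2 hy)
    (by norm_num : (0:ℝ) ≤ 1/2) (by norm_num : (0:ℝ) ≤ 1/2) (by norm_num)
  have : (1/2 : ℝ) • x ^ p + (1/2 : ℝ) • y ^ p ≤ ((1/2:ℝ) • x + (1/2:ℝ) • y) ^ p := h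
  simp only [smul_eq_mul] at this
  have hmid : (1/2:ℝ) * x + (1/2:ℝ) * y = (x + y) / 2 := by ring
  rw [hmid] at this
  linarith

theorem stmt13 (a b : ℝ) (hb1 : 1 < b) (hb2 : b ≤ 2) (ha : -1 < a) (ha0 : a ≤ 0)
    (s t : ℝ) (hs : 0 ≤ s) (hst : s ≤ t) :
    (∀ u₁ u₂ : ℝ, 0 ≤ u₁ → u₁ ≤ u₂ → u₂ ≤ s →
      (2:ℝ) ^ b * (t - u₁) ^ b + (2:ℝ) ^ b * (s - u₁) ^ b - 2 * (t + s - 2 * u₁) ^ b ≤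
      (2:ℝ) ^ b * (t - u₂) ^ b + (2:ℝ) ^ b * (s - u₂) ^ b - 2 * (t + s - 2 * u₂) ^ b) ∧
    (∀ u : ℝ, 0 ≤ u → u ≤ s →
      (2:ℝ) ^ b * (t - u) ^ b + (2:ℝ) ^ b * (s - u) ^ b - 2 * (t + s - 2 * u) ^ b ≤
      ((2:ℝ) ^ b - 2) * (t - s) ^ b) := by
  set f : ℝ → ℝ := fun u =>
    (2:ℝ) ^ b * (t - u) ^ b + (2:ℝ) ^ b * (s - u) ^ b - 2 * (t + s - 2 * u) ^ b with hf
  -- derivative of f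
  have hderiv : ∀ u : ℝ, HasDerivAt f
      ((2:ℝ) ^ b * (b * (t - u) ^ (b-1) * (-1)) + (2:ℝ) ^ b * (b * (s - u) ^ (b-1) * (-1))
        - 2 * (b * (t + s - 2 * u) ^ (b-1) * (-2))) u := by
    intro u
    have h1 : HasDerivAt (fun u : ℝ => (t - u) ^ b) (b * (t - u) ^ (b-1) * (-1)) u := by
      have hi : HasDerivAt (fun u : ℝ => t - u) (-1) u := by
        simpa using (hasDerivAt_id' u).const_sub t
      exact (Real.hasDerivAt_rpow_const (Or.inr hb1.le)).comp u hi
    have h2 : HasDerivAt (fun u : ℝ => (s - u) ^ b) (b * (s - u) ^ (b-1) * (-1)) u := by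
      have hi : HasDerivAt (fun u : ℝ => s - u) (-1) u := by
        simpa using (hasDerivAt_id' u).const_sub s
      exact (Real.hasDerivAt_rpow_const (Or.inr hb1.le)).comp u hi
    have h3 : HasDerivAt (fun u : ℝ => (t + s - 2 * u) ^ b)
        (b * (t + s - 2 * u) ^ (b-1) * (-2)) u := by
      have hi : HasDerivAt (fun u : ℝ => t + s - 2 * u) (-2) u := by
        simpa using ((hasDerivAt_id' u).const_mul 2).const_sub (t+s)
      exact (Real.hasDerivAt_rpow_const (Or.inr hb1.le)).comp u hi
    exact ((h1.const_mul _).add (h2.const_mul _)).sub (h3.const_mul 2)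
  have hmono : MonotoneOn f (Set.Icc 0 s) := by
    apply monotoneOn_of_deriv_nonneg (convex_Icc 0 s)
    · have hd : Differentiable ℝ f := fun u => (hderiv u).differentiableAt
      exact hd.continuous.continuousOn
    · exact fun u _ => (hderiv u).differentiableAt.differentiableWithinAt
    · intro u hu
      rw [interior_Icc] at hu
      rw [(hderiv u).deriv]
      have hx : (0:ℝ) ≤ t - u := by linarith [hu.2, hst]
      have hy : (0:ℝ) ≤ s - u := by linarith [hu.2]
      have hkey := midpoint_concave (p := b - 1) (by linarith) (by linarith) hx hy
      have hmid : ((t - u) + (s - u)) / 2 = (t + s - 2*u)/2 := by ring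
      rw [hmid] at hkey
      -- (t+s-2u)^(b-1) = 2^(b-1) * ((t+s-2u)/2)^(b-1)
      have hz : (0:ℝ) ≤ (t + s - 2*u)/2 := by linarith
      have hsplit : (t + s - 2*u) ^ (b-1) = (2:ℝ)^(b-1) * ((t + s - 2*u)/2) ^ (b-1) := by
        rw [← Real.mul_rpow (by norm_num) hz]
        congr 1; ring
      have h2b : (2:ℝ) ^ b = 2 * (2:ℝ) ^ (b-1) := by
        rw [← Real.rpow_one_add' (by norm_num) (by linarith : (1:ℝ) + (b-1) ≠ 0)]
        ring_nf
      have hbpos : (0:ℝ) < b := by linarith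
      have h2bpos : (0:ℝ) < (2:ℝ) ^ (b-1) := Real.rpow_pos_of_pos (by norm_num) _
      rw [hsplit, h2b]
      nlinarith [mul_nonneg (mul_nonneg hbpos.le h2bpos.le)
        (by linarith : (0:ℝ) ≤ 2 * ((t + s - 2*u)/2) ^ (b-1) - ((t - u) ^ (b-1) + (s - u) ^ (b-1)))]
  have hfs : f s = ((2:ℝ) ^ b - 2) * (t - s) ^ b := by
    simp only [hf]
    rw [show s - s = (0:ℝ) by ring, Real.zero_rpow (by linarith : b ≠ 0),
      show t + s - 2 * s = t - s by ring]
    ring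
  constructor
  · intro u₁ u₂ h1 h12 h2s
    exact hmono ⟨h1, by linarith⟩ ⟨by linarith, h2s⟩ h12
  · intro u hu hus
    have := hmono ⟨hu, hus⟩ ⟨hs, le_refl s⟩ hus
    rw [hfs] at this
    exact this
end

section
/- For 0 < b < 1 and all 0 ≤ u ≤ s ≤ t: 2(t+s-2u)^b - 2^b(t-u)^b - 2^b(s-u)^b ≤ (2 - 2^b)(t-s)^b. -/
open MeasureTheory intervalIntegral Real Filter

/-- Midpoint convexity of `x ↦ x ^ p` for `p ≤ 0` on positives, via AM–GM. -/
lemma mid_rpow {p a y : ℝ} (hp : p ≤ 0) (ha : 0 < a) (hy : 0 ≤ y) :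
    2 * (a + y) ^ p ≤ a ^ p + (a + 2 * y) ^ p := by
  have ha2 : 0 < a + 2 * y := by linarith
  have hay : 0 < a + y := by linarith
  set u := a ^ (p / 2) with hu
  set v := (a + 2 * y) ^ (p / 2) with hv
  have hu2 : u * u = a ^ p := by
    rw [hu, ← Real.rpow_add ha]; ring_nf
  have hv2 : v * v = (a + 2 * y) ^ p := by
    rw [hv, ← Real.rpow_add ha2]; ring_nf
  have huv : u * v = (a * (a + 2 * y)) ^ (p / 2) := by
    rw [hu, hv, Real.mul_rpow ha.le ha2.le]
  have h1 : (a + y) ^ p = ((a + y) * (a + y)) ^ (p / 2) := by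
    rw [Real.mul_rpow hay.le hay.le, ← Real.rpow_add hay]; ring_nf
  have h2 : a * (a + 2 * y) ≤ (a + y) * (a + y) := by nlinarith [sq_nonneg y]
  have h3 : ((a + y) * (a + y)) ^ (p / 2) ≤ (a * (a + 2 * y)) ^ (p / 2) :=
    Real.rpow_le_rpow_of_nonpos (by positivity) h2 (by linarith)
  have h4 : 2 * (u * v) ≤ u * u + v * v := by nlinarith [sq_nonneg (u - v)]
  calc 2 * (a + y) ^ p = 2 * ((a + y) * (a + y)) ^ (p / 2) := by rw [h1]
    _ ≤ 2 * (a * (a + 2 * y)) ^ (p / 2) := by linarith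
    _ = 2 * (u * v) := by rw [huv]
    _ ≤ u * u + v * v := h4
    _ = a ^ p + (a + 2 * y) ^ p := by rw [hu2, hv2]

lemma key_ineq {b : ℝ} (hb0 : 0 < b) (hb1 : b < 1) {X Y : ℝ} (hX : 0 ≤ X) (hY : 0 ≤ Y) :
    (2 * Y) ^ b - 2 * Y ^ b ≤ (X + 2 * Y) ^ b - 2 * (X + Y) ^ b + X ^ b := by
  set f : ℝ → ℝ := fun x => (x + 2 * Y) ^ b - 2 * (x + Y) ^ b + x ^ b with hf
  have hcont : ContinuousOn f (Set.Ici 0) := by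
    apply ContinuousOn.add
    apply ContinuousOn.sub
    · exact ((Real.continuous_rpow_const hb0.le).comp (continuous_id.add continuous_const)).continuousOn
    · exact (continuous_const.mul ((Real.continuous_rpow_const hb0.le).comp
        (continuous_id.add continuous_const))).continuousOn
    · exact (Real.continuous_rpow_const hb0.le).continuousOn
  have hderiv : ∀ x : ℝ, 0 < x → HasDerivAt f
      (b * (x + 2 * Y) ^ (b - 1) - 2 * (b * (x + Y) ^ (b - 1)) + b * x ^ (b - 1)) x := by
    intro x hx
    have h1 : HasDerivAt (fun x : ℝ => (x + 2 * Y) ^ b) (b * (x + 2 * Y) ^ (b - 1)) x := by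
      have := (Real.hasDerivAt_rpow_const (p := b) (x := x + 2 * Y)
        (Or.inl (by positivity))).comp x ((hasDerivAt_id x).add_const (2 * Y))
      simpa [Function.comp_def] using this
    have h2 : HasDerivAt (fun x : ℝ => (x + Y) ^ b) (b * (x + Y) ^ (b - 1)) x := by
      have := (Real.hasDerivAt_rpow_const (p := b) (x := x + Y)
        (Or.inl (by positivity))).comp x ((hasDerivAt_id x).add_const Y)
      simpa [Function.comp_def] using this
    have h3 : HasDerivAt (fun x : ℝ => x ^ b) (b * x ^ (b - 1)) x :=
      Real.hasDerivAt_rpow_const (Or.inl hx.ne')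
    exact (h1.sub (h2.const_mul 2)).add h3
  have hmono : MonotoneOn f (Set.Ici 0) := by
    apply monotoneOn_of_deriv_nonneg (convex_Ici 0) hcont
    · intro x hx
      rw [interior_Ici] at hx
      exact ((hderiv x hx).differentiableAt).differentiableWithinAt
    · intro x hx
      rw [interior_Ici] at hx
      rw [(hderiv x hx).deriv]
      have := mid_rpow (p := b - 1) (a := x) (y := Y) (by linarith) hx hY
      nlinarith
  have h0 : f 0 ≤ f X := hmono Set.self_mem_Ici hX hX
  have hf0 : f 0 = (2 * Y) ^ b - 2 * Y ^ b := by
    simp [hf, Real.zero_rpow hb0.ne']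
  rw [hf0] at h0
  simpa [hf] using h0

theorem stmt14 (b : ℝ) (hb0 : 0 < b) (hb1 : b < 1)
    (u s t : ℝ) (hu : 0 ≤ u) (hus : u ≤ s) (hst : s ≤ t) :
    2 * (t + s - 2 * u) ^ b - (2:ℝ) ^ b * (t - u) ^ b - (2:ℝ) ^ b * (s - u) ^ b ≤
      (2 - (2:ℝ) ^ b) * (t - s) ^ b := by

  set X := 2 * (s - u) with hX
  set Y := t - s with hY
  have hX0 : 0 ≤ X := by simp [hX]; linarith
  have hY0 : 0 ≤ Y := by simp [hY]; linarith
  have key := key_ineq hb0 hb1 hX0 hY0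
  have e1 : t + s - 2 * u = X + Y := by rw [hX, hY]; ring
  have e2 : (2:ℝ) ^ b * (t - u) ^ b = (X + 2 * Y) ^ b := by
    rw [← Real.mul_rpow (by norm_num) (by linarith)]
    congr 1; rw [hX, hY]; ring
  have e3 : (2:ℝ) ^ b * (s - u) ^ b = X ^ b := by
    rw [← Real.mul_rpow (by norm_num) (by linarith)]
  have e4 : (2 - (2:ℝ) ^ b) * (t - s) ^ b = 2 * Y ^ b - (2 * Y) ^ b := by
    rw [Real.mul_rpow (by norm_num) hY0, hY]; ring
  rw [e1, e2, e3, e4]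
  linarith
end

section
/- Let a > -1, b ∈ (0,1) ∪ (1,2). For fixed 0 ≤ r < v ≤ s < t: lim_{T→∞} T^{1-b} ∫_r^v u^a [(t+T-u)^b - (s+T-u)^b] du = (b/(a+1)) (t-s)(v^{a+1} - r^{a+1}). -/
open MeasureTheory intervalIntegral Real Filter

lemma key_lim (b c d : ℝ) :
    Tendsto (fun T : ℝ => T ^ (1 - b) * ((T + c) ^ b - (T + d) ^ b)) atTop
      (nhds (b * c - b * d)) := by
  set g : ℝ → ℝ := fun x => (1 + c * x) ^ b - (1 + d * x) ^ b with hgdef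
  have hg : HasDerivAt g (b * c - b * d) 0 := by
    have h1 : HasDerivAt (fun x : ℝ => 1 + c * x) c 0 := by
      simpa using ((hasDerivAt_id (0:ℝ)).const_mul c).const_add 1
    have h2 : HasDerivAt (fun x : ℝ => 1 + d * x) d 0 := by
      simpa using ((hasDerivAt_id (0:ℝ)).const_mul d).const_add 1
    have h3 := h1.rpow_const (p := b) (by norm_num)
    have h4 := h2.rpow_const (p := b) (by norm_num)
    have h5 := h3.sub h4
    simp only [mul_zero, add_zero, Real.one_rpow, mul_one] at h5
    rw [show b * c - b * d = c * b - d * b by ring]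
    exact h5
  have hslope := hasDerivAt_iff_tendsto_slope.mp hg
  have hinv : Tendsto (fun T : ℝ => 1 / T) atTop (nhdsWithin (0:ℝ) {(0:ℝ)}ᶜ) := by
    rw [tendsto_nhdsWithin_iff]
    constructor
    · simpa using tendsto_inv_atTop_zero
    · filter_upwards [eventually_gt_atTop (0:ℝ)] with T hT
      simp [ne_of_gt, hT.ne']
  have hcomp := hslope.comp hinv
  refine hcomp.congr' ?_
  filter_upwards [eventually_gt_atTop (0:ℝ), eventually_gt_atTop (-c),
    eventually_gt_atTop (-d)] with T hT0 hTc hTd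
  have hTc' : (0:ℝ) < T + c := by linarith
  have hTd' : (0:ℝ) < T + d := by linarith
  have hg0 : g 0 = 0 := by simp [hgdef]
  have e1 : (1 : ℝ) + c * (1 / T) = (T + c) / T := by field_simp
  have e2 : (1 : ℝ) + d * (1 / T) = (T + d) / T := by field_simp
  show slope g 0 (1 / T) = T ^ (1 - b) * ((T + c) ^ b - (T + d) ^ b)
  rw [slope_def_field, hg0]
  simp only [hgdef, e1, e2, sub_zero]
  rw [Real.div_rpow hTc'.le hT0.le, Real.div_rpow hTd'.le hT0.le,
    Real.rpow_sub hT0, Real.rpow_one]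
  field_simp

theorem stmt16 (a b : ℝ) (ha : -1 < a)
    (hb : (0 < b ∧ b < 1) ∨ (1 < b ∧ b < 2))
    (r v s t : ℝ) (hr : 0 ≤ r) (hrv : r < v) (hvs : v ≤ s) (hst : s < t) :
    Tendsto (fun T : ℝ =>
        T ^ (1 - b) * ∫ u in r..v, u ^ a * ((t + T - u) ^ b - (s + T - u) ^ b))
      atTop
      (nhds ((b / (a + 1)) * (t - s) * (v ^ (a + 1) - r ^ (a + 1)))) := by
  have hb0 : 0 < b := by rcases hb with ⟨h1,h2⟩|⟨h1,h2⟩ <;> linarith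
  have hb2 : b < 2 := by rcases hb with ⟨h1,h2⟩|⟨h1,h2⟩ <;> linarith
  have ha1 : (0:ℝ) < a + 1 := by linarith
  have hfun : (fun T : ℝ => T ^ (1 - b) *
      ∫ u in r..v, u ^ a * ((t + T - u) ^ b - (s + T - u) ^ b))
      = fun T : ℝ => ∫ u in r..v,
        T ^ (1 - b) * (u ^ a * ((t + T - u) ^ b - (s + T - u) ^ b)) := by
    funext T; rw [intervalIntegral.integral_const_mul]
  rw [hfun]
  have hlimval : (b / (a + 1)) * (t - s) * (v ^ (a + 1) - r ^ (a + 1))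
      = ∫ u in r..v, (b * (t - s)) * u ^ a := by
    rw [intervalIntegral.integral_const_mul, integral_rpow (Or.inl ha)]
    field_simp
  rw [hlimval]
  apply intervalIntegral.tendsto_integral_filter_of_dominated_convergence
    (bound := fun u => 2 * (b * (t - s)) * u ^ a)
  · filter_upwards with T
    apply Measurable.aestronglyMeasurable
    fun_prop
  · filter_upwards [eventually_ge_atTop (1:ℝ), eventually_ge_atTop t] with T hT1 hTt
    refine ae_of_all _ fun x hx => ?_
    rw [Set.uIoc_of_le hrv.le] at hx
    obtain ⟨hrx, hxv⟩ := hx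
    have hx0 : 0 < x := lt_of_le_of_lt hr hrx
    have hT0 : (0:ℝ) < T := lt_of_lt_of_le one_pos hT1
    have hA : (0:ℝ) < s + T - x := by linarith [hvs, hxv]
    have hAB : s + T - x < t + T - x := by linarith
    -- MVT
    obtain ⟨ξ, hξmem, hξeq⟩ := exists_hasDerivAt_eq_slope (fun y => y ^ b)
      (fun y => b * y ^ (b - 1)) hAB
      (ContinuousOn.rpow_const continuousOn_id fun y hy =>
        Or.inl (ne_of_gt (lt_of_lt_of_le hA hy.1)))
      (fun y hy => Real.hasDerivAt_rpow_const (Or.inl (ne_of_gt (lt_trans hA hy.1))))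
    have hξ0 : 0 < ξ := lt_trans hA hξmem.1
    have hdiff : (t + T - x) ^ b - (s + T - x) ^ b = b * ξ ^ (b - 1) * (t - s) := by
      have hne : (t + T - x) - (s + T - x) = t - s := by ring
      rw [hξeq, hne, div_mul_cancel₀ _ (sub_ne_zero.mpr hst.ne')]
    have hξT : T ≤ ξ := by
      have : T ≤ s + T - x := by linarith [le_trans hxv hvs]
      linarith [hξmem.1]
    have hξ2T : ξ ≤ 2 * T := by
      have : t + T - x ≤ 2 * T := by linarith
      linarith [hξmem.2]
    have hratio : T ^ (1 - b) * ξ ^ (b - 1) ≤ 2 := by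
      have heq : T ^ (1 - b) * ξ ^ (b - 1) = (ξ / T) ^ (b - 1) := by
        rw [Real.div_rpow hξ0.le hT0.le, show (1 : ℝ) - b = -(b-1) by ring,
          Real.rpow_neg hT0.le]
        field_simp
      rw [heq]
      have h1 : (1:ℝ) ≤ ξ / T := (one_le_div hT0).mpr hξT
      calc (ξ / T) ^ (b - 1) ≤ (ξ / T) ^ (1:ℝ) :=
            Real.rpow_le_rpow_of_exponent_le h1 (by linarith)
        _ = ξ / T := Real.rpow_one _
        _ ≤ 2 := by rw [div_le_iff₀ hT0]; linarith
    rw [hdiff]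
    have hxa : 0 ≤ x ^ a := Real.rpow_nonneg hx0.le a
    have hTb : 0 ≤ T ^ (1 - b) := Real.rpow_nonneg hT0.le _
    have hξb : 0 ≤ ξ ^ (b - 1) := Real.rpow_nonneg hξ0.le _
    have hts : (0:ℝ) ≤ t - s := by linarith
    rw [Real.norm_eq_abs, abs_of_nonneg (mul_nonneg hTb (mul_nonneg hxa
      (mul_nonneg (mul_nonneg hb0.le hξb) hts)))]
    calc T ^ (1 - b) * (x ^ a * (b * ξ ^ (b - 1) * (t - s)))
        = (T ^ (1 - b) * ξ ^ (b - 1)) * (b * (t - s) * x ^ a) := by ring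
      _ ≤ 2 * (b * (t - s) * x ^ a) := by
          exact mul_le_mul_of_nonneg_right hratio
            (mul_nonneg (mul_nonneg hb0.le hts) hxa)
      _ = 2 * (b * (t - s)) * x ^ a := by ring
  · exact (intervalIntegral.intervalIntegrable_rpow' ha).const_mul _
  · refine ae_of_all _ fun x hx => ?_
    rw [Set.uIoc_of_le hrv.le] at hx
    have hx0 : 0 < x := lt_of_le_of_lt hr hx.1
    have h := (key_lim b (t - x) (s - x)).const_mul (x ^ a)
    have hv : x ^ a * (b * (t - x) - b * (s - x)) = b * (t - s) * x ^ a := by ring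
    rw [hv] at h
    refine h.congr fun T => ?_
    rw [show t + T - x = T + (t - x) by ring, show s + T - x = T + (s - x) by ring]
    ring
end

section
/- Let ζ be a centered Gaussian process with covariance Q_{a,b} where a > -1 and 1 < b ≤ 2. Then for all s, t ≥ 0, lim_{T→∞} T^{-(a+b-1)} E[(ζ(s+T)-ζ(T))(ζ(t+T)-ζ(T))] = 2^{b-2} b B(a+1, b-1) · s·t, where B is the Beta function; i.e., the rescaled increment covariance converges to that of a random-line process. -/
open MeasureTheory intervalIntegral Real Filter

open Set

noncomputable def phi (b s t x : ℝ) : ℝ := (x+s)^b + (x+t)^b - (x+s+t)^b - x^b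


lemma int_shift_pow {r : ℝ} (hr : -1 < r) (c t : ℝ) :
    ∫ q in (0:ℝ)..t, (c + q) ^ r = ((c+t)^(r+1) - c^(r+1))/(r+1) := by
  rw [intervalIntegral.integral_comp_add_left (fun y : ℝ => y ^ r) c]
  rw [integral_rpow (Or.inl hr)]
  simp

lemma betaInt {a c : ℝ} (ha : -1 < a) (hc : -1 < c) :
    IntegrableOn (fun v : ℝ => v ^ a * (1 - v) ^ c) (Set.Ioo 0 1) := by
  have h1 : IntervalIntegrable (fun v : ℝ => v ^ a * (1 - v) ^ c) volume 0 (1/2) := by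
    apply (intervalIntegrable_rpow' ha).mul_continuousOn
    apply ContinuousOn.rpow_const
    · exact (continuous_const.sub continuous_id).continuousOn
    · intro x hx
      left
      simp only [Set.uIcc_of_le (by norm_num : (0:ℝ) ≤ 1/2), Set.mem_Icc] at hx
      intro h
      have : x = 1 := by nlinarith [sub_eq_zero.mp h]
      linarith [hx.2]
  have h2 : IntervalIntegrable (fun v : ℝ => v ^ a * (1 - v) ^ c) volume (1/2) 1 := by
    have base : IntervalIntegrable (fun x : ℝ => x ^ c) volume 0 (1/2) :=
      intervalIntegrable_rpow' hc
    have h3 : IntervalIntegrable (fun v : ℝ => (1 - v) ^ c) volume (1 - 0) (1 - 1/2) :=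
      base.comp_sub_left 1
    norm_num at h3
    apply h3.symm.continuousOn_mul (g := fun v : ℝ => v ^ a)
    apply ContinuousOn.rpow_const continuous_id.continuousOn
    intro x hx
    left
    simp only [Set.uIcc_of_le (by norm_num : (1:ℝ)/2 ≤ 1), Set.mem_Icc] at hx
    simp only [id]
    intro h; rw [h] at hx; norm_num at hx
  exact ((intervalIntegrable_iff_integrableOn_Ioc_of_le (by norm_num)).mp
    (h1.trans h2)).mono_set Set.Ioo_subset_Ioc_self

lemma shiftInt {r : ℝ} (hr : -1 < r) (c u v : ℝ) :
    IntervalIntegrable (fun y : ℝ => (c + y) ^ r) volume u v := by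
  have := (intervalIntegrable_rpow' (a := c+u) (b := c+v) hr).comp_add_left c
  simpa using this

lemma inner_eq {b : ℝ} (hb1 : 1 < b) (x t p : ℝ) :
    ∫ q in (0:ℝ)..t, (x+p+q)^(b-2) = ((x+t+p)^(b-1) - (x+p)^(b-1))/(b-1) := by
  rw [int_shift_pow (by linarith) (x+p) t, show b-2+1 = b-1 by ring,
    show x+p+t = x+t+p by ring]

lemma phi_eq_double {b : ℝ} (hb1 : 1 < b) (s t x : ℝ) :
    phi b s t x = -(b*(b-1)) * ∫ p in (0:ℝ)..s, ∫ q in (0:ℝ)..t, (x+p+q)^(b-2) := by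
  have hb0 : b ≠ 0 := by linarith
  have hb1' : b - 1 ≠ 0 := by intro h; rw [sub_eq_zero] at h; linarith
  simp_rw [inner_eq hb1]
  rw [intervalIntegral.integral_div, integral_sub (shiftInt (by linarith) (x+t) 0 s)
      (shiftInt (by linarith) x 0 s),
    int_shift_pow (by linarith : (-1:ℝ) < b-1) (x+t) s,
    int_shift_pow (by linarith : (-1:ℝ) < b-1) x s,
    show b-1+1 = b by ring, show x+t+s = x+s+t by ring]
  unfold phi
  field_simp
  ring

lemma phi_bounds {b : ℝ} (hb1 : 1 < b) (hb2 : b ≤ 2) {s t x : ℝ}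
    (hs : 0 ≤ s) (ht : 0 ≤ t) (hx : 0 < x) :
    -(b*(b-1)) * (s*(t * x^(b-2))) ≤ phi b s t x ∧
      phi b s t x ≤ -(b*(b-1)) * (s*(t * (x+s+t)^(b-2))) := by
  have hr : (-1:ℝ) < b-2 := by linarith
  have hC : -(b*(b-1)) ≤ 0 := by nlinarith
  have hint : ∀ p ∈ Icc (0:ℝ) s, IntervalIntegrable (fun q : ℝ => (x+p+q)^(b-2)) volume 0 t :=
    fun p _ => shiftInt hr (x+p) 0 t
  -- pointwise bounds on inner integral
  have hinner_ub : ∀ p ∈ Icc (0:ℝ) s, (∫ q in (0:ℝ)..t, (x+p+q)^(b-2)) ≤ t * x^(b-2) := by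
    intro p hp
    calc (∫ q in (0:ℝ)..t, (x+p+q)^(b-2)) ≤ ∫ _q in (0:ℝ)..t, x^(b-2) := by
          apply integral_mono_on ht (hint p hp) intervalIntegrable_const
          intro q hq
          exact rpow_le_rpow_of_nonpos hx (by linarith [hp.1, hq.1]) (by linarith)
      _ = t * x^(b-2) := by simp
  have hinner_lb : ∀ p ∈ Icc (0:ℝ) s,
      t * (x+s+t)^(b-2) ≤ ∫ q in (0:ℝ)..t, (x+p+q)^(b-2) := by
    intro p hp
    calc t * (x+s+t)^(b-2) = ∫ _q in (0:ℝ)..t, (x+s+t)^(b-2) := by simp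
      _ ≤ ∫ q in (0:ℝ)..t, (x+p+q)^(b-2) := by
          apply integral_mono_on ht intervalIntegrable_const (hint p hp)
          intro q hq
          exact rpow_le_rpow_of_nonpos (by linarith [hp.1, hq.1])
            (by linarith [hp.2, hq.2]) (by linarith)
  -- integrability of inner integral as function of p
  have hcont : IntervalIntegrable (fun p : ℝ => ∫ q in (0:ℝ)..t, (x+p+q)^(b-2)) volume 0 s := by
    apply IntervalIntegrable.congr (f := fun p : ℝ => ((x+t+p)^(b-1) - (x+p)^(b-1))/(b-1))
    · intro p _
      exact (inner_eq hb1 x t p).symm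
    · exact ((shiftInt (by linarith) (x+t) 0 s).sub (shiftInt (by linarith) x 0 s)).div_const _
  have hdub : (∫ p in (0:ℝ)..s, ∫ q in (0:ℝ)..t, (x+p+q)^(b-2)) ≤ s * (t * x^(b-2)) := by
    calc (∫ p in (0:ℝ)..s, ∫ q in (0:ℝ)..t, (x+p+q)^(b-2))
        ≤ ∫ _p in (0:ℝ)..s, t * x^(b-2) :=
          integral_mono_on hs hcont intervalIntegrable_const hinner_ub
      _ = s * (t * x^(b-2)) := by simp; ring
  have hdlb : s * (t * (x+s+t)^(b-2)) ≤ ∫ p in (0:ℝ)..s, ∫ q in (0:ℝ)..t, (x+p+q)^(b-2) := by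
    calc s * (t * (x+s+t)^(b-2)) = ∫ _p in (0:ℝ)..s, t * (x+s+t)^(b-2) := by simp; ring
      _ ≤ ∫ p in (0:ℝ)..s, ∫ q in (0:ℝ)..t, (x+p+q)^(b-2) :=
          integral_mono_on hs intervalIntegrable_const hcont hinner_lb
  rw [phi_eq_double hb1]
  constructor
  · exact mul_le_mul_of_nonpos_left hdub hC
  · exact mul_le_mul_of_nonpos_left hdlb hC

lemma g_int {a b : ℝ} (ha : -1 < a) (hb1 : 1 < b) :
    IntegrableOn (fun v : ℝ => v^a * (2*(1-v))^(b-2)) (Ioo 0 1) := by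
  apply (((betaInt ha (by linarith : (-1:ℝ) < b-2)).const_mul ((2:ℝ)^(b-2))).congr
    ((ae_restrict_iff' measurableSet_Ioo).mpr (ae_of_all _ ?_)))
  intro v hv
  show 2^(b-2) * (v ^ a * (1 - v) ^ (b-2)) = v^a * (2*(1-v))^(b-2)
  rw [Real.mul_rpow (by norm_num) (by linarith [hv.2])]
  ring

lemma Kc_meas {a b : ℝ} (d : ℝ) :
    AEStronglyMeasurable (fun v : ℝ => v ^ a * (2*(1-v)+d) ^ (b-2))
      (volume.restrict (Ioo 0 1)) := by
  apply Measurable.aestronglyMeasurable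
  fun_prop

lemma Kc_bound {a b : ℝ} (hb2 : b ≤ 2) {d : ℝ} (hd : 0 ≤ d) {v : ℝ} (hv : v ∈ Ioo (0:ℝ) 1) :
    ‖v ^ a * (2*(1-v)+d) ^ (b-2)‖ ≤ v^a * (2*(1-v))^(b-2) := by
  have h1 : (0:ℝ) < 2*(1-v) := by nlinarith [hv.2]
  rw [Real.norm_eq_abs, abs_of_nonneg (mul_nonneg (rpow_nonneg hv.1.le _)
    (rpow_nonneg (by linarith) _))]
  exact mul_le_mul_of_nonneg_left
    (rpow_le_rpow_of_nonpos h1 (by linarith) (by linarith)) (rpow_nonneg hv.1.le _)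

lemma Kc_int {a b : ℝ} (ha : -1 < a) (hb1 : 1 < b) (hb2 : b ≤ 2) {d : ℝ} (hd : 0 ≤ d) :
    IntegrableOn (fun v : ℝ => v ^ a * (2*(1-v)+d) ^ (b-2)) (Ioo 0 1) := by
  apply Integrable.mono (g_int ha hb1) (Kc_meas d)
  apply (ae_restrict_iff' measurableSet_Ioo).mpr (ae_of_all _ ?_)
  intro v hv
  calc ‖v ^ a * (2*(1-v)+d) ^ (b-2)‖ ≤ v^a * (2*(1-v))^(b-2) := Kc_bound hb2 hd hv
    _ ≤ ‖v^a * (2*(1-v))^(b-2)‖ := le_abs_self _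

lemma Kc_tendsto {a b : ℝ} (ha : -1 < a) (hb1 : 1 < b) (hb2 : b ≤ 2) (c : ℝ) (hc : 0 ≤ c) :
    Tendsto (fun T : ℝ => ∫ v in Ioo (0:ℝ) 1, v ^ a * (2*(1-v)+c/T) ^ (b-2)) atTop
      (nhds (∫ v in Ioo (0:ℝ) 1, v ^ a * (2*(1-v)) ^ (b-2))) := by
  apply MeasureTheory.tendsto_integral_filter_of_dominated_convergence
    (fun v => v^a * (2*(1-v))^(b-2))
  · exact Eventually.of_forall (fun T => Kc_meas _)
  · filter_upwards [eventually_ge_atTop (1:ℝ)] with T hT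
    apply (ae_restrict_iff' measurableSet_Ioo).mpr (ae_of_all _ ?_)
    intro v hv
    exact Kc_bound hb2 (div_nonneg hc (by linarith)) hv
  · exact g_int ha hb1
  · apply (ae_restrict_iff' measurableSet_Ioo).mpr (ae_of_all _ ?_)
    intro v hv
    have h1 : (0:ℝ) < 2*(1-v) := by nlinarith [hv.2]
    have hdiv : Tendsto (fun T : ℝ => c/T) atTop (nhds 0) :=
      tendsto_const_nhds.div_atTop tendsto_id
    have hbase : Tendsto (fun T : ℝ => 2*(1-v)+c/T) atTop (nhds (2*(1-v))) := by
      simpa using tendsto_const_nhds.add hdiv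
    have hc2 : ContinuousAt (fun y : ℝ => y ^ (b-2)) (2*(1-v)) :=
      Real.continuousAt_rpow_const _ _ (Or.inl (ne_of_gt h1))
    exact (tendsto_const_nhds.mul (hc2.tendsto.comp hbase))

lemma limit_val {a b : ℝ} : (∫ v in Ioo (0:ℝ) 1, v ^ a * (2*(1-v)) ^ (b-2))
    = 2^(b-2) * Beta (a+1) (b-1) := by
  have h : Beta (a+1) (b-1) = ∫ v in Ioo (0:ℝ) 1, v ^ a * (1-v) ^ (b-2) := by
    rw [Beta, intervalIntegral.integral_of_le zero_le_one,
      MeasureTheory.integral_Ioc_eq_integral_Ioo]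
    simp only [add_sub_cancel_right, show b-1-1 = b-2 by ring]
  rw [h, ← MeasureTheory.integral_const_mul]
  apply setIntegral_congr_fun measurableSet_Ioo
  intro v hv
  show v ^ a * (2*(1-v)) ^ (b-2) = 2^(b-2) * (v ^ a * (1 - v) ^ (b-2))
  rw [Real.mul_rpow (by norm_num) (by linarith [hv.2.le])]
  ring

lemma scale_id {b T y : ℝ} (hT : 0 < T) (hy : 0 ≤ y) :
    T^(2-b) * (T*y)^(b-2) = y^(b-2) := by
  rw [Real.mul_rpow hT.le hy, ← mul_assoc, ← Real.rpow_add hT,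
    show 2-b+(b-2) = 0 by ring, rpow_zero, one_mul]

lemma subst_eq {a b s t : ℝ} (T : ℝ) (hT : 0 < T) :
    T^(-(a+b-1)) * ∫ u in (0:ℝ)..T, u^a * phi b s t (2*T-2*u)
      = ∫ v in Ioo (0:ℝ) 1, v^a * (T^(2-b) * phi b s t (2*T*(1-v))) := by
  have h1 := intervalIntegral.integral_comp_mul_left
    (a := (0:ℝ)) (b := (1:ℝ)) (fun u => u^a * phi b s t (2*T-2*u)) hT.ne'
  simp only [mul_zero, mul_one, smul_eq_mul] at h1
  have h2 : (∫ v in (0:ℝ)..1, (T*v)^a * phi b s t (2*T-2*(T*v)))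
      = ∫ v in (0:ℝ)..1, T^a * (v^a * phi b s t (2*T*(1-v))) := by
    apply intervalIntegral.integral_congr
    intro v hv
    rw [Set.uIcc_of_le zero_le_one] at hv
    show (T*v)^a * phi b s t (2*T-2*(T*v)) = T^a * (v^a * phi b s t (2*T*(1-v)))
    rw [Real.mul_rpow hT.le hv.1, show 2*T-2*(T*v) = 2*T*(1-v) by ring]
    ring
  have h3 : (∫ u in (0:ℝ)..T, u^a * phi b s t (2*T-2*u))
      = T * ∫ v in (0:ℝ)..1, T^a * (v^a * phi b s t (2*T*(1-v))) := by
    rw [← h2, h1]; field_simp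
  have h4 : (∫ v in Ioo (0:ℝ) 1, v^a * (T^(2-b) * phi b s t (2*T*(1-v))))
      = T^(2-b) * ∫ v in (0:ℝ)..1, v^a * phi b s t (2*T*(1-v)) := by
    rw [← intervalIntegral.integral_const_mul, intervalIntegral.integral_of_le zero_le_one,
      MeasureTheory.integral_Ioc_eq_integral_Ioo]
    exact setIntegral_congr_fun measurableSet_Ioo (fun v _ => mul_left_comm _ _ _)
  rw [h3, h4, intervalIntegral.integral_const_mul, ← mul_assoc, ← mul_assoc]
  congr 1
  rw [show T^(-(a+b-1)) * T * T^a = T^(-(a+b-1)) * (T^(1:ℝ) * T^a) by rw [Real.rpow_one]; ring,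
    ← Real.rpow_add hT, ← Real.rpow_add hT]
  congr 1
  ring

lemma cont_aux {b s t : ℝ} (hb : 0 ≤ b) {g : ℝ → ℝ} (hg : Continuous g) :
    Continuous (fun v : ℝ => phi b s t (g v)) := by
  unfold phi
  have H : ∀ e : ℝ, Continuous (fun v : ℝ => (g v + e) ^ b) := fun e =>
    (hg.add continuous_const).rpow_const (fun _ => Or.inr hb)
  have H0 : Continuous (fun v : ℝ => (g v) ^ b) := hg.rpow_const (fun _ => Or.inr hb)
  simp only [show ∀ x:ℝ, g x + s + t = g x + (s+t) from fun x => by ring]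
  exact (((H s).add (H t)).sub (H (s+t))).sub H0

lemma main_tendsto {a b s t : ℝ} (ha : -1 < a) (hb1 : 1 < b) (hb2 : b ≤ 2)
    (hs : 0 ≤ s) (ht : 0 ≤ t) :
    Tendsto (fun T : ℝ => ∫ v in Ioo (0:ℝ) 1, v^a * (T^(2-b) * phi b s t (2*T*(1-v))))
      atTop (nhds (-(b*(b-1)) * (s*t) * (2^(b-2) * Beta (a+1) (b-1)))) := by
  set C := -(b*(b-1)) * (s*t) with hC
  have hlow : Tendsto (fun T : ℝ => C * ∫ v in Ioo (0:ℝ) 1, v^a * (2*(1-v)+0/T)^(b-2))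
      atTop (nhds (C * (2^(b-2) * Beta (a+1) (b-1)))) := by
    rw [← limit_val (a := a) (b := b)]
    exact (Kc_tendsto ha hb1 hb2 0 le_rfl).const_mul C
  have hup : Tendsto (fun T : ℝ => C * ∫ v in Ioo (0:ℝ) 1, v^a * (2*(1-v)+(s+t)/T)^(b-2))
      atTop (nhds (C * (2^(b-2) * Beta (a+1) (b-1)))) := by
    rw [← limit_val (a := a) (b := b)]
    exact (Kc_tendsto ha hb1 hb2 (s+t) (by linarith)).const_mul C
  apply tendsto_of_tendsto_of_tendsto_of_le_of_le' hlow hup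
  · filter_upwards [eventually_ge_atTop (1:ℝ)] with T hT
    have hT0 : (0:ℝ) < T := by linarith
    rw [← MeasureTheory.integral_const_mul]
    apply setIntegral_mono_on
    · exact (Kc_int ha hb1 hb2 (d := 0/T) (by simp)).const_mul C
    · have hcont : Continuous (fun v : ℝ => T^(2-b) * phi b s t (2*T*(1-v))) :=
        continuous_const.mul (cont_aux (s := s) (t := t) (by linarith : (0:ℝ) ≤ b)
          ((continuous_const.mul (continuous_const.sub continuous_id)) :
            Continuous (fun v : ℝ => 2*T*(1-v))))
      have := (intervalIntegrable_rpow' ha (a := (0:ℝ)) (b := (1:ℝ))).mul_continuousOn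
        hcont.continuousOn
      exact ((intervalIntegrable_iff_integrableOn_Ioc_of_le zero_le_one).mp this).mono_set
        Ioo_subset_Ioc_self
    · exact measurableSet_Ioo
    · intro v hv
      have hx : (0:ℝ) < 2*T*(1-v) := by nlinarith [hv.2]
      have pb := phi_bounds hb1 hb2 hs ht (s := s) (t := t) hx
      have hsc : (2*(1-v))^(b-2) = T^(2-b) * (2*T*(1-v))^(b-2) := by
        rw [show 2*T*(1-v) = T*(2*(1-v)) by ring]
        exact (scale_id hT0 (by nlinarith [hv.2.le] : (0:ℝ) ≤ 2*(1-v))).symm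
      calc C * (v^a * (2*(1-v)+0/T)^(b-2))
          = v^a * (T^(2-b) * (-(b*(b-1)) * (s*(t*(2*T*(1-v))^(b-2))))) := by
            rw [zero_div, add_zero, hsc, hC]; ring
        _ ≤ v^a * (T^(2-b) * phi b s t (2*T*(1-v))) := by
            apply mul_le_mul_of_nonneg_left _ (rpow_nonneg hv.1.le a)
            exact mul_le_mul_of_nonneg_left pb.1 (rpow_nonneg hT0.le _)
  · filter_upwards [eventually_ge_atTop (1:ℝ)] with T hT
    have hT0 : (0:ℝ) < T := by linarith
    rw [← MeasureTheory.integral_const_mul]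
    apply setIntegral_mono_on
    · have hcont : Continuous (fun v : ℝ => T^(2-b) * phi b s t (2*T*(1-v))) :=
        continuous_const.mul (cont_aux (s := s) (t := t) (by linarith : (0:ℝ) ≤ b)
          ((continuous_const.mul (continuous_const.sub continuous_id)) :
            Continuous (fun v : ℝ => 2*T*(1-v))))
      have := (intervalIntegrable_rpow' ha (a := (0:ℝ)) (b := (1:ℝ))).mul_continuousOn
        hcont.continuousOn
      exact ((intervalIntegrable_iff_integrableOn_Ioc_of_le zero_le_one).mp this).mono_set
        Ioo_subset_Ioc_self
    · exact (Kc_int ha hb1 hb2 (d := (s+t)/T) (by positivity)).const_mul C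
    · exact measurableSet_Ioo
    · intro v hv
      have hx : (0:ℝ) < 2*T*(1-v) := by nlinarith [hv.2]
      have pb := phi_bounds hb1 hb2 hs ht (s := s) (t := t) hx
      have hsc2 : (2*(1-v)+(s+t)/T)^(b-2) = T^(2-b) * (2*T*(1-v)+s+t)^(b-2) := by
        rw [show 2*T*(1-v)+s+t = T*(2*(1-v)+(s+t)/T) by field_simp; ring]
        exact (scale_id hT0 (by nlinarith [hv.2.le, div_nonneg (by linarith : (0:ℝ) ≤ s+t) hT0.le] : (0:ℝ) ≤ 2*(1-v)+(s+t)/T)).symm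
      calc v^a * (T^(2-b) * phi b s t (2*T*(1-v)))
          ≤ v^a * (T^(2-b) * (-(b*(b-1)) * (s*(t*(2*T*(1-v)+s+t)^(b-2))))) := by
            apply mul_le_mul_of_nonneg_left _ (rpow_nonneg hv.1.le a)
            exact mul_le_mul_of_nonneg_left pb.2 (rpow_nonneg hT0.le _)
        _ = C * (v^a * (2*(1-v)+(s+t)/T)^(b-2)) := by
            rw [hsc2, hC]; ring

lemma decomp {a b s t : ℝ} (ha : -1 < a) (hb1 : 1 < b) (hs : 0 ≤ s) (ht : 0 ≤ t)
    {T : ℝ} (hT : 0 < T) :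
    Q a b (s+T) (t+T) - Q a b (s+T) T - Q a b T (t+T) + Q a b T T
      = (1/(1-b)) * ((∫ u in (0:ℝ)..T, u^a * phi b s t (2*T-2*u))
          + ∫ u in T..(min s t + T),
              u^a * ((t+T-u)^b + (s+T-u)^b - (s+T+(t+T)-2*u)^b)) := by
  have hb0 : (0:ℝ) ≤ b := by linarith
  have hcont : ∀ (w z : ℝ), Continuous
      (fun u : ℝ => (z-u)^b + (w-u)^b - (w+z-2*u)^b) := by
    intro w z
    have H : ∀ c d : ℝ, Continuous (fun u : ℝ => (c - d*u)^b) := fun c d =>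
      ((continuous_const.sub (continuous_const.mul continuous_id)).rpow_const
        (fun _ => Or.inr hb0))
    have h1 := H z 1; have h2 := H w 1; have h3 := H (w+z) 2
    simp only [one_mul] at h1 h2
    exact (h1.add h2).sub h3
  have hint : ∀ (w z c d : ℝ), IntervalIntegrable
      (fun u : ℝ => u^a * ((z-u)^b + (w-u)^b - (w+z-2*u)^b)) volume c d :=
    fun w z c d => (intervalIntegrable_rpow' ha).mul_continuousOn (hcont w z).continuousOn
  simp only [Q, min_add_add_right, min_eq_right (by linarith : T ≤ s+T),
    min_eq_left (by linarith : T ≤ t+T), min_self]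
  rw [← integral_add_adjacent_intervals (hint (s+T) (t+T) 0 T) (hint (s+T) (t+T) T (min s t + T))]
  have key : (∫ u in (0:ℝ)..T, u ^ a * ((t+T - u) ^ b + (s+T - u) ^ b - (s+T + (t+T) - 2 * u) ^ b))
      - (∫ u in (0:ℝ)..T, u ^ a * ((T - u) ^ b + (s+T - u) ^ b - (s+T + T - 2 * u) ^ b))
      - (∫ u in (0:ℝ)..T, u ^ a * ((t+T - u) ^ b + (T - u) ^ b - (T + (t+T) - 2 * u) ^ b))
      + (∫ u in (0:ℝ)..T, u ^ a * ((T - u) ^ b + (T - u) ^ b - (T + T - 2 * u) ^ b))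
      = ∫ u in (0:ℝ)..T, u^a * phi b s t (2*T-2*u) := by
    rw [← integral_sub (hint (s+T) (t+T) 0 T) (hint (s+T) T 0 T),
      ← integral_sub ((hint (s+T) (t+T) 0 T).sub (hint (s+T) T 0 T)) (hint T (t+T) 0 T),
      ← integral_add (((hint (s+T) (t+T) 0 T).sub (hint (s+T) T 0 T)).sub (hint T (t+T) 0 T))
        (hint T T 0 T)]
    apply intervalIntegral.integral_congr
    intro u _
    simp only [phi]
    ring_nf
  linear_combination (1/(1-b)) * key

lemma R_tendsto {a b s t : ℝ} (ha : -1 < a) (hb1 : 1 < b) (hs : 0 ≤ s) (ht : 0 ≤ t) :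
    Tendsto (fun T : ℝ => T^(-(a+b-1)) * ∫ u in T..(min s t + T),
        u^a * ((t+T-u)^b + (s+T-u)^b - (s+T+(t+T)-2*u)^b)) atTop (nhds 0) := by
  set m := min s t with hm
  have hm0 : 0 ≤ m := le_min hs ht
  have hms : m ≤ s := min_le_left _ _
  have hmt : m ≤ t := min_le_right _ _
  have hb0 : (0:ℝ) ≤ b := by linarith
  set K : ℝ := ((2:ℝ)^a+1) * (3*(s+t)^b) * m with hK
  apply squeeze_zero_norm' (a := fun T => K * T^(1-b))
  · filter_upwards [eventually_ge_atTop (1:ℝ), eventually_ge_atTop m] with T hT1 hTm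
    have hT0 : (0:ℝ) < T := by linarith
    have hnorm : ‖∫ u in T..(m + T),
        u^a * ((t+T-u)^b + (s+T-u)^b - (s+T+(t+T)-2*u)^b)‖
        ≤ (((2:ℝ)^a+1) * T^a * (3*(s+t)^b)) * |m + T - T| := by
      apply intervalIntegral.norm_integral_le_of_norm_le_const

      intro u hu
      rw [Set.uIoc_of_le (by linarith : T ≤ m + T)] at hu
      have hu1 : T < u := hu.1
      have hu2 : u ≤ m + T := hu.2
      have hu0 : 0 < u := by linarith
      have hua : u^a ≤ ((2:ℝ)^a+1) * T^a := by
        rcases le_or_gt 0 a with h | h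
        · have h2 : u^a ≤ (2*T)^a := rpow_le_rpow hu0.le (by linarith) h
          rw [Real.mul_rpow (by norm_num) hT0.le] at h2
          nlinarith [rpow_pos_of_pos hT0 a]
        · have h2 : u^a ≤ T^a := rpow_le_rpow_of_nonpos hT0 hu1.le h.le
          nlinarith [rpow_pos_of_pos hT0 a, rpow_pos_of_pos (by norm_num : (0:ℝ) < 2) a]
      have hG : |(t+T-u)^b + (s+T-u)^b - (s+T+(t+T)-2*u)^b| ≤ 3*(s+t)^b := by
        have e1 : (t+T-u)^b ≤ (s+t)^b :=
          rpow_le_rpow (by linarith) (by linarith) hb0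
        have e2 : (s+T-u)^b ≤ (s+t)^b :=
          rpow_le_rpow (by linarith) (by linarith) hb0
        have e3 : (s+T+(t+T)-2*u)^b ≤ (s+t)^b :=
          rpow_le_rpow (by linarith) (by linarith) hb0
        have n1 : 0 ≤ (t+T-u)^b := rpow_nonneg (by linarith) _
        have n2 : 0 ≤ (s+T-u)^b := rpow_nonneg (by linarith) _
        have n3 : 0 ≤ (s+T+(t+T)-2*u)^b := rpow_nonneg (by linarith) _
        rw [abs_le]
        constructor <;> nlinarith
      calc ‖u^a * ((t+T-u)^b + (s+T-u)^b - (s+T+(t+T)-2*u)^b)‖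
          = u^a * |(t+T-u)^b + (s+T-u)^b - (s+T+(t+T)-2*u)^b| := by
            rw [norm_mul, Real.norm_eq_abs, Real.norm_eq_abs, abs_of_nonneg (rpow_nonneg hu0.le a)]
        _ ≤ (((2:ℝ)^a+1) * T^a) * (3*(s+t)^b) := by
            apply mul_le_mul hua hG (abs_nonneg _)
            positivity
        _ = ((2:ℝ)^a+1) * T^a * (3*(s+t)^b) := by ring
    rw [add_sub_cancel_right, abs_of_nonneg hm0] at hnorm
    calc ‖T^(-(a+b-1)) * ∫ u in T..(m + T),
            u^a * ((t+T-u)^b + (s+T-u)^b - (s+T+(t+T)-2*u)^b)‖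
        = T^(-(a+b-1)) * ‖∫ u in T..(m + T),
            u^a * ((t+T-u)^b + (s+T-u)^b - (s+T+(t+T)-2*u)^b)‖ := by
          rw [norm_mul, Real.norm_eq_abs (T^(-(a+b-1))),
            abs_of_nonneg (rpow_nonneg hT0.le _)]
      _ ≤ T^(-(a+b-1)) * ((((2:ℝ)^a+1) * T^a * (3*(s+t)^b)) * m) :=
          mul_le_mul_of_nonneg_left hnorm (rpow_nonneg hT0.le _)
      _ = K * (T^(-(a+b-1)) * T^a) := by rw [hK]; ring
      _ = K * T^(1-b) := by
          rw [← Real.rpow_add hT0, show -(a+b-1)+a = 1-b by ring]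
  · have h1 : Tendsto (fun T : ℝ => T^(-(b-1))) atTop (nhds 0) :=
      tendsto_rpow_neg_atTop (by linarith)
    have h2 := h1.const_mul K
    rw [mul_zero] at h2
    apply h2.congr
    intro T
    rw [show -(b-1) = 1-b by ring]

theorem stmt17 (a b : ℝ) (ha : -1 < a) (hb1 : 1 < b) (hb2 : b ≤ 2)
    (s t : ℝ) (hs : 0 ≤ s) (ht : 0 ≤ t) :
    Tendsto (fun T : ℝ =>
        T ^ (-(a + b - 1)) *
          (Q a b (s + T) (t + T) - Q a b (s + T) T - Q a b T (t + T) + Q a b T T))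
      atTop
      (nhds ((2:ℝ) ^ (b - 2) * b * Beta (a + 1) (b - 1) * s * t)) := by
  have hbne : (1:ℝ) - b ≠ 0 := by intro h; linarith
  have hMain : Tendsto (fun T : ℝ =>
      T^(-(a+b-1)) * ∫ u in (0:ℝ)..T, u^a * phi b s t (2*T-2*u)) atTop
      (nhds (-(b*(b-1)) * (s*t) * (2^(b-2) * Beta (a+1) (b-1)))) := by
    apply (main_tendsto ha hb1 hb2 hs ht).congr'
    filter_upwards [eventually_gt_atTop (0:ℝ)] with T hT
    exact (subst_eq T hT).symm
  have hR := R_tendsto ha hb1 hs ht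
  have hsum := (hMain.add hR).const_mul (1/(1-b))
  rw [add_zero] at hsum
  have hval : (1/(1-b)) * (-(b*(b-1)) * (s*t) * (2^(b-2) * Beta (a+1) (b-1)))
      = (2:ℝ)^(b-2) * b * Beta (a+1) (b-1) * s * t := by
    field_simp
    ring
  rw [hval] at hsum
  apply hsum.congr'
  filter_upwards [eventually_gt_atTop (0:ℝ)] with T hT
  rw [decomp ha hb1 hs ht hT]
  ring
end

section
/- Let a > -1, -1 < b < 1 with a+b+1 > 0, and let ζ be centered Gaussian with covariance Q_{a,b}. Then for all s, t ≥ 0, lim_{T→∞} T^{-a} E[(ζ(s+T)-ζ(T))(ζ(t+T)-ζ(T))] = (1/((1-b)(b+1))) · (1/2)(s^{b+1} + t^{b+1} - |t-s|^{b+1}), the covariance of a (scaled) fractional Brownian motion with Hurst parameter (b+1)/2. -/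
open MeasureTheory intervalIntegral Real Filter Set Topology

lemma secondDiff_bound (p : ℝ) (hp : p ≤ 2) {x c d : ℝ} (hx : 0 < x) (hc : 0 ≤ c) (hd : 0 ≤ d) :
    |(x + c) ^ p + (x + d) ^ p - x ^ p - (x + c + d) ^ p|
      ≤ |p| * |p - 1| * c * d * x ^ (p - 2) := by
  rcases hc.eq_or_lt with rfl | hc
  · simp [mul_zero, zero_mul]
  rcases hd.eq_or_lt with rfl | hd
  · simp [mul_zero, zero_mul]
  set F : ℝ → ℝ := fun y => (y + d) ^ p - y ^ p with hF
  have hder : ∀ y, 0 < y → HasDerivAt F (p * (y + d) ^ (p - 1) - p * y ^ (p - 1)) y := by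
    intro y hy
    have h1 : HasDerivAt (fun y : ℝ => (y + d) ^ p) (p * (y + d) ^ (p - 1)) y := by
      simpa using ((hasDerivAt_id y).add_const d).rpow_const
        (Or.inl (by positivity : y + d ≠ 0))
    have h2 : HasDerivAt (fun y : ℝ => y ^ p) (p * y ^ (p - 1)) y := by
      simpa using (hasDerivAt_id y).rpow_const (Or.inl (ne_of_gt hy))
    exact h1.sub h2
  obtain ⟨ξ, hξ, hslope⟩ := exists_hasDerivAt_eq_slope F
      (fun y => p * (y + d) ^ (p - 1) - p * y ^ (p - 1)) (by linarith : x < x + c)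
      (fun y hy => (hder y (lt_of_lt_of_le hx hy.1)).continuousAt.continuousWithinAt)
      (fun y hy => hder y (lt_trans hx hy.1))
  have hξx : x < ξ := hξ.1
  have hder2 : ∀ y : ℝ, 0 < y → HasDerivAt (fun y : ℝ => y ^ (p - 1)) ((p - 1) * y ^ (p - 2)) y := by
    intro y hy
    have := (hasDerivAt_id y).rpow_const (p := p - 1) (Or.inl (ne_of_gt hy))
    have e : p - 1 - 1 = p - 2 := by ring
    simpa [e] using this
  obtain ⟨η, hη, hslope2⟩ := exists_hasDerivAt_eq_slope (fun y : ℝ => y ^ (p - 1))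
      (fun y => (p - 1) * y ^ (p - 2)) (by linarith : ξ < ξ + d)
      (fun y hy => (hder2 y (by have := hy.1; linarith)).continuousAt.continuousWithinAt)
      (fun y hy => hder2 y (by have := hy.1; linarith))
  have hηx : x < η := by have := hη.1; linarith
  have key : (x + c) ^ p + (x + d) ^ p - x ^ p - (x + c + d) ^ p
      = -(c * d * (p * (p - 1) * η ^ (p - 2))) := by
    have e1 : F (x + c) - F x = c * (p * (ξ + d) ^ (p - 1) - p * ξ ^ (p - 1)) := by
      rw [hslope]; field_simp; rw [add_sub_cancel_left, mul_div_cancel_left₀ _ hc.ne']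
    have e2 : (ξ + d) ^ (p - 1) - ξ ^ (p - 1) = d * ((p - 1) * η ^ (p - 2)) := by
      rw [hslope2]; field_simp; rw [add_sub_cancel_left, mul_div_cancel_left₀ _ hd.ne']
    have e4 : F (x + c) - F x = c * p * (d * ((p - 1) * η ^ (p - 2))) := by
      rw [e1, ← e2]; ring
    simp only [hF] at e4
    nlinarith [e4]
  rw [key, abs_neg, abs_mul, abs_mul, abs_mul, abs_mul,
    abs_of_nonneg hc.le, abs_of_nonneg hd.le,
    abs_of_nonneg (rpow_nonneg (by linarith : (0:ℝ) ≤ η) (p - 2))]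
  have e5 : c * d * (|p| * |p - 1| * η ^ (p - 2)) = |p| * |p - 1| * c * d * η ^ (p - 2) := by ring
  rw [e5]
  exact mul_le_mul_of_nonneg_left
    (rpow_le_rpow_of_nonpos hx (le_of_lt hηx) (by linarith))
    (by positivity)


/-- Affine-base rpow integrability. -/
lemma II_affine {b : ℝ} (hb : -1 < b) (c k A B : ℝ) (hk : k ≠ 0) :
    IntervalIntegrable (fun r : ℝ => (c + k * r) ^ b) volume A B := by
  have h0 : IntervalIntegrable (fun x : ℝ => x ^ b) volume (c + k * A) (c + k * B) :=
    intervalIntegrable_rpow' hb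
  have h1 := h0.comp_add_left c
  have h2 := h1.comp_mul_left (c := k)
  have eA : (c + k * A - c) / k = A := by field_simp; ring
  have eB : (c + k * B - c) / k = B := by field_simp; ring
  rwa [eA, eB] at h2

lemma II_affine_sub {b : ℝ} (hb : -1 < b) (c k A B : ℝ) (hk : k ≠ 0) :
    IntervalIntegrable (fun r : ℝ => (c - k * r) ^ b) volume A B := by
  have := II_affine hb c (-k) A B (by simpa using hk)
  simpa [sub_eq_add_neg, neg_mul] using this

/-- Main term integrability on `[0,T]`: `u^a (c + k (T-u))^b`. -/
lemma II_main {a b : ℝ} (ha : -1 < a) (hb : -1 < b) {T c k : ℝ} (hT : 0 < T)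
    (hc : 0 ≤ c) (hk : 0 < k) :
    IntervalIntegrable (fun u : ℝ => u ^ a * (c + k * (T - u)) ^ b) volume 0 T := by
  have part1 : IntervalIntegrable (fun u : ℝ => u ^ a * (c + k * (T - u)) ^ b)
      volume 0 (T / 2) := by
    apply (intervalIntegrable_rpow' ha).mul_continuousOn
    apply ContinuousOn.rpow_const
    · exact continuousOn_const.add (continuousOn_const.mul
        (continuousOn_const.sub continuousOn_id))
    · intro u hu
      rw [uIcc_of_le (by linarith : (0:ℝ) ≤ T / 2)] at hu
      have : c + k * (T - u) > 0 := by nlinarith [hu.2, hu.1]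
      exact Or.inl (ne_of_gt this)
  have part2 : IntervalIntegrable (fun u : ℝ => u ^ a * (c + k * (T - u)) ^ b)
      volume (T / 2) T := by
    have hq : IntervalIntegrable (fun r : ℝ => (c + k * r) ^ b) volume (T / 2) 0 :=
      II_affine hb c k _ _ (ne_of_gt hk)
    have h1 := hq.comp_sub_left T
    have e1 : T - T / 2 = T / 2 := by ring
    rw [e1, sub_zero] at h1
    apply h1.continuousOn_mul
    apply ContinuousOn.rpow_const continuousOn_id
    intro u hu
    rw [uIcc_of_le (by linarith : T / 2 ≤ T)] at hu
    exact Or.inl (by nlinarith [hu.1] : u ≠ 0)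
  exact part1.trans part2

/-- `(T+v)^a * (c - k*v)^b` integrable on `[0,s]` (continuous first factor). -/
lemma II_h {a b : ℝ} (hb : -1 < b) {T c k s : ℝ} (hT : 0 < T) (hs : 0 ≤ s) (hk : 0 < k) :
    IntervalIntegrable (fun v : ℝ => (T + v) ^ a * (c - k * v) ^ b) volume 0 s := by
  have hq : IntervalIntegrable (fun v : ℝ => (c - k * v) ^ b) volume 0 s :=
    II_affine_sub hb c k _ _ (ne_of_gt hk)
  apply hq.continuousOn_mul
  apply ContinuousOn.rpow_const (continuousOn_const.add continuousOn_id)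
  intro v hv
  rw [uIcc_of_le hs] at hv
  exact Or.inl (by nlinarith [hv.1] : T + v ≠ 0)


noncomputable def gg (b s t r : ℝ) : ℝ :=
  (s + 2 * r) ^ b + (t + 2 * r) ^ b - (s + t + 2 * r) ^ b - (2 * r) ^ b

noncomputable def GG (b s t r : ℝ) : ℝ :=
  ((s + 2 * r) ^ (b + 1) + (t + 2 * r) ^ (b + 1) - (s + t + 2 * r) ^ (b + 1)
    - (2 * r) ^ (b + 1)) / (2 * (b + 1))

lemma reorder (p s t r : ℝ) :
    (s + 2*r) ^ p + (t + 2*r) ^ p - (s + t + 2*r) ^ p - (2*r) ^ p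
      = (2*r + s) ^ p + (2*r + t) ^ p - (2*r) ^ p - (2*r + s + t) ^ p := by
  rw [show s + 2*r = 2*r + s by ring, show t + 2*r = 2*r + t by ring,
    show s + t + 2*r = 2*r + s + t by ring]
  ring

lemma gg_bound {b s t : ℝ} (hb2 : b ≤ 2) (hs : 0 ≤ s) (ht : 0 ≤ t) {r : ℝ} (hr : 0 < r) :
    |gg b s t r| ≤ |b| * |b - 1| * s * t * 2 ^ (b - 2) * r ^ (b - 2) := by
  have e : gg b s t r = (2*r + s) ^ b + (2*r + t) ^ b - (2*r) ^ b - (2*r + s + t) ^ b := by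
    rw [gg, reorder]
  rw [e]
  have h := secondDiff_bound b hb2 (by linarith : (0:ℝ) < 2 * r) hs ht
  calc |(2*r+s)^b + (2*r+t)^b - (2*r)^b - (2*r+s+t)^b|
      ≤ |b| * |b-1| * s * t * (2*r) ^ (b-2) := h
    _ = |b| * |b-1| * s * t * 2 ^ (b-2) * r ^ (b-2) := by
        rw [Real.mul_rpow (by norm_num) hr.le]; ring

lemma GG_bound {b s t : ℝ} (hb1 : -1 < b) (hb2 : b < 1) (hs : 0 ≤ s) (ht : 0 ≤ t)
    {r : ℝ} (hr : 0 < r) :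
    |GG b s t r| ≤ |b+1| * |b| * s * t * 2 ^ (b - 1) / (2*(b+1)) * r ^ (b - 1) := by
  have hb1' : (0:ℝ) < b + 1 := by linarith
  have e : GG b s t r = ((2*r + s) ^ (b+1) + (2*r + t) ^ (b+1) - (2*r) ^ (b+1)
      - (2*r + s + t) ^ (b+1)) / (2*(b+1)) := by rw [GG, reorder]
  rw [e, abs_div, abs_of_pos (by linarith : (0:ℝ) < 2*(b+1))]
  rw [div_mul_eq_mul_div, div_le_div_iff_of_pos_right (by linarith : (0:ℝ) < 2*(b+1))]
  have h := secondDiff_bound (b+1) (by linarith) (by linarith : (0:ℝ) < 2 * r) hs ht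
  rw [show b + 1 - 1 = b by ring, show b + 1 - 2 = b - 1 by ring] at h
  calc |(2*r+s)^(b+1) + (2*r+t)^(b+1) - (2*r)^(b+1) - (2*r+s+t)^(b+1)|
      ≤ |b+1| * |b| * s * t * (2*r) ^ (b-1) := h
    _ = |b+1| * |b| * s * t * 2 ^ (b-1) * r ^ (b-1) := by
        rw [Real.mul_rpow (by norm_num) hr.le]; ring

lemma gg_intInt {b s t : ℝ} (hb1 : -1 < b) (A B : ℝ) :
    IntervalIntegrable (gg b s t) volume A B := by
  have i1 := II_affine hb1 s 2 A B two_ne_zero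
  have i2 := II_affine hb1 t 2 A B two_ne_zero
  have i3 := II_affine hb1 (s + t) 2 A B two_ne_zero
  have i4 : IntervalIntegrable (fun r : ℝ => (2 * r) ^ b) volume A B := by
    simpa using II_affine hb1 0 2 A B two_ne_zero
  have := ((i1.add i2).sub i3).sub i4
  exact this

lemma gg_contOn {b s t : ℝ} (hs : 0 ≤ s) (ht : 0 ≤ t) :
    ContinuousOn (gg b s t) (Ioi 0) := by
  have base : ∀ c : ℝ, 0 ≤ c → ContinuousOn (fun r : ℝ => (c + 2 * r) ^ b) (Ioi (0:ℝ)) := by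
    intro c hc
    apply ContinuousOn.rpow_const
      (continuousOn_const.add (continuousOn_const.mul continuousOn_id))
    intro r hr
    simp only [mem_Ioi] at hr
    exact Or.inl (by simp only [Pi.add_apply, Pi.mul_apply, id_eq]; nlinarith)
  have h4 : ContinuousOn (fun r : ℝ => (2 * r) ^ b) (Ioi (0:ℝ)) := by
    have := base 0 le_rfl; simpa using this
  exact (((base s hs).add (base t ht)).sub (base (s+t) (by linarith))).sub h4

lemma gg_integrableOn {b s t : ℝ} (hb1 : -1 < b) (hb2 : b < 1) (hs : 0 ≤ s) (ht : 0 ≤ t) :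
    IntegrableOn (gg b s t) (Ioi 0) volume := by
  have h01 : IntegrableOn (gg b s t) (Ioc 0 1) volume := by
    rw [← intervalIntegrable_iff_integrableOn_Ioc_of_le zero_le_one]
    exact gg_intInt hb1 0 1
  have h1inf : IntegrableOn (gg b s t) (Ioi 1) volume := by
    apply Integrable.mono'
      ((integrableOn_Ioi_rpow_of_lt (by linarith : b - 2 < -1) one_pos).const_mul
        (|b| * |b - 1| * s * t * 2 ^ (b - 2)))
    · exact ((gg_contOn hs ht).mono (Ioi_subset_Ioi zero_le_one)).aestronglyMeasurable
        measurableSet_Ioi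
    · filter_upwards [ae_restrict_mem measurableSet_Ioi] with r hr
      rw [Real.norm_eq_abs]
      exact gg_bound (by linarith) hs ht (lt_trans one_pos hr)
  rw [← Ioc_union_Ioi_eq_Ioi (zero_le_one (α := ℝ))]
  exact h01.union h1inf

lemma GG_deriv {b s t : ℝ} (hb1 : -1 < b) (hs : 0 ≤ s) (ht : 0 ≤ t) {r : ℝ} (hr : 0 < r) :
    HasDerivAt (GG b s t) (gg b s t r) r := by
  have hb1' : b + 1 ≠ 0 := by linarith
  have hlin : ∀ c : ℝ, HasDerivAt (fun r : ℝ => c + 2 * r) 2 r := fun c => by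
    simpa using ((hasDerivAt_id r).const_mul 2).const_add c
  have hterm : ∀ c : ℝ, 0 ≤ c →
      HasDerivAt (fun r : ℝ => (c + 2 * r) ^ (b+1)) ((b+1) * (c + 2*r) ^ b * 2) r := by
    intro c hc
    have h := (hlin c).rpow_const (p := b + 1) (Or.inl (by nlinarith : c + 2 * r ≠ 0))
    rw [show b + 1 - 1 = b by ring] at h
    convert h using 1
    ring
  have h1 := hterm s hs
  have h2 := hterm t ht
  have h3 := hterm (s + t) (by linarith)
  have h4 : HasDerivAt (fun r : ℝ => (2 * r) ^ (b+1)) ((b+1) * (2*r) ^ b * 2) r := by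
    have := (hterm 0 le_rfl)
    simpa using this
  have hD := (((h1.add h2).sub h3).sub h4).div_const (2*(b+1))
  have egg : ((b+1) * (s+2*r)^b * 2 + (b+1) * (t+2*r)^b * 2 - (b+1) * (s+t+2*r)^b * 2
      - (b+1) * (2*r)^b * 2) / (2*(b+1)) = gg b s t r := by
    rw [gg]; field_simp
  rw [egg] at hD
  exact hD

lemma GG_tendsto {b s t : ℝ} (hb1 : -1 < b) (hb2 : b < 1) (hs : 0 ≤ s) (ht : 0 ≤ t) :
    Tendsto (GG b s t) atTop (𝓝 0) := by
  have h : Tendsto (fun r : ℝ => |b+1| * |b| * s * t * 2 ^ (b - 1) / (2*(b+1)) * r ^ (b - 1))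
      atTop (𝓝 0) := by
    have h := (tendsto_rpow_neg_atTop (by linarith : (0:ℝ) < 1 - b)).const_mul
      (|b+1| * |b| * s * t * 2 ^ (b - 1) / (2*(b+1)))
    rw [mul_zero] at h
    simpa only [show -(1 - b) = b - 1 by ring] using h
  refine squeeze_zero_norm' ?_ h
  filter_upwards [eventually_gt_atTop (0:ℝ)] with r hr
  rw [Real.norm_eq_abs]
  exact GG_bound hb1 hb2 hs ht hr

lemma GG_cont {b s t : ℝ} (hb1 : -1 < b) : Continuous (GG b s t) := by
  have hb1' : (0:ℝ) ≤ b + 1 := by linarith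
  have base : ∀ c : ℝ, Continuous (fun r : ℝ => (c + 2 * r) ^ (b+1)) := by
    intro c
    rw [continuous_iff_continuousAt]
    intro x
    exact (continuousAt_const.add (continuousAt_const.mul continuousAt_id)).rpow_const
      (Or.inr hb1')
  have h4 : Continuous (fun r : ℝ => (2 * r) ^ (b+1)) := by simpa using base 0
  exact ((((base s).add (base t)).sub (base (s+t))).sub h4).div_const _

lemma gg_integral {b s t : ℝ} (hb1 : -1 < b) (hb2 : b < 1) (hs : 0 ≤ s) (ht : 0 ≤ t) :
    ∫ r in Ioi 0, gg b s t r = ((s+t)^(b+1) - s^(b+1) - t^(b+1)) / (2*(b+1)) := by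
  have hb1' : b + 1 ≠ 0 := by linarith
  have h := integral_Ioi_of_hasDerivAt_of_tendsto (a := 0) (m := 0)
    ((GG_cont (s := s) (t := t) hb1).continuousWithinAt)
    (fun x hx => GG_deriv hb1 hs ht (mem_Ioi.mp hx))
    (gg_integrableOn hb1 hb2 hs ht) (GG_tendsto hb1 hb2 hs ht)
  rw [h, GG]
  norm_num [Real.zero_rpow hb1']
  ring


noncomputable def hh (b s t v : ℝ) : ℝ :=
  (t - v) ^ b + (s - v) ^ b - (s + t - 2 * v) ^ b

noncomputable def HH (b s t v : ℝ) : ℝ :=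
  (-(t - v) ^ (b+1) - (s - v) ^ (b+1) + (s + t - 2 * v) ^ (b+1) / 2) / (b + 1)

lemma hh_intInt {b s t : ℝ} (hb1 : -1 < b) (A B : ℝ) :
    IntervalIntegrable (hh b s t) volume A B := by
  have i1 : IntervalIntegrable (fun v : ℝ => (t - v) ^ b) volume A B := by
    simpa using II_affine_sub hb1 t 1 A B one_ne_zero
  have i2 : IntervalIntegrable (fun v : ℝ => (s - v) ^ b) volume A B := by
    simpa using II_affine_sub hb1 s 1 A B one_ne_zero
  have i3 := II_affine_sub hb1 (s + t) 2 A B two_ne_zero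
  exact (i1.add i2).sub i3

lemma HH_contOn {b s t : ℝ} (hb1 : -1 < b) : Continuous (HH b s t) := by
  have hb1' : (0:ℝ) ≤ b + 1 := by linarith
  have base : ∀ c k : ℝ, Continuous (fun v : ℝ => (c - k * v) ^ (b+1)) := by
    intro c k
    rw [continuous_iff_continuousAt]
    intro x
    exact (continuousAt_const.sub (continuousAt_const.mul continuousAt_id)).rpow_const
      (Or.inr hb1')
  have b1 : Continuous (fun v : ℝ => (t - v) ^ (b+1)) := by simpa using base t 1
  have b2 : Continuous (fun v : ℝ => (s - v) ^ (b+1)) := by simpa using base s 1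
  exact (((b1.neg).sub b2).add ((base (s+t) 2).div_const 2)).div_const _

lemma HH_deriv {b s t : ℝ} (hb1 : -1 < b) {v : ℝ} (hv0 : 0 < v) (hvs : v < s) (hst : s ≤ t) :
    HasDerivAt (HH b s t) (hh b s t v) v := by
  have hb1' : b + 1 ≠ 0 := by linarith
  have e : b + 1 - 1 = b := by ring
  have h1 : HasDerivAt (fun v : ℝ => (t - v) ^ (b+1)) ((b+1) * (t - v) ^ b * (-1)) v := by
    have := ((hasDerivAt_id v).const_sub t).rpow_const (p := b+1)
      (Or.inl (by nlinarith : t - v ≠ 0))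
    rw [e] at this
    convert this using 1
    show _ = -1 * (b + 1) * (t - v) ^ b; ring; rfl
  have h2 : HasDerivAt (fun v : ℝ => (s - v) ^ (b+1)) ((b+1) * (s - v) ^ b * (-1)) v := by
    have := ((hasDerivAt_id v).const_sub s).rpow_const (p := b+1)
      (Or.inl (by nlinarith : s - v ≠ 0))
    rw [e] at this
    convert this using 1
    show _ = -1 * (b + 1) * (s - v) ^ b; ring; rfl
  have h3 : HasDerivAt (fun v : ℝ => (s + t - 2 * v) ^ (b+1)) ((b+1) * (s + t - 2*v) ^ b * (-2)) v := by
    have hlin : HasDerivAt (fun v : ℝ => s + t - 2 * v) (-2) v := by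
      simpa using ((hasDerivAt_id v).const_mul 2).const_sub (s + t)
    have := hlin.rpow_const (p := b+1) (Or.inl (by nlinarith : s + t - 2 * v ≠ 0))
    rw [e] at this
    convert this using 1
    ring
  have hD := ((h1.neg.sub h2).add (h3.div_const 2)).div_const (b+1)
  have ehh : (-((b+1) * (t - v) ^ b * (-1)) - (b+1) * (s - v) ^ b * (-1)
      + (b+1) * (s + t - 2*v) ^ b * (-2) / 2) / (b+1) = hh b s t v := by
    rw [hh]; field_simp; ring
  rw [ehh] at hD
  exact hD

lemma hh_integral {b s t : ℝ} (hb1 : -1 < b) (hs : 0 ≤ s) (hst : s ≤ t) :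
    ∫ v in (0:ℝ)..s, hh b s t v
      = (t^(b+1) + s^(b+1) - (t-s)^(b+1)/2 - (s+t)^(b+1)/2) / (b+1) := by
  have hb1' : b + 1 ≠ 0 := by linarith
  rw [integral_eq_sub_of_hasDeriv_right_of_le hs
    ((HH_contOn (s := s) (t := t) hb1).continuousOn)
    (fun v hv => (HH_deriv hb1 hv.1 hv.2 hst).hasDerivWithinAt)
    (hh_intInt hb1 0 s)]
  rw [HH, HH]
  rw [show s + t - 2 * s = t - s by ring, sub_self, Real.zero_rpow hb1']
  norm_num
  field_simp
  ring


lemma ratio_tendsto_gen (a w : ℝ) :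
    Tendsto (fun T : ℝ => T ^ (-a) * (T + w) ^ a) atTop (𝓝 1) := by
  have h0 : Tendsto (fun T : ℝ => 1 + w / T) atTop (𝓝 1) := by
    have := (tendsto_inv_atTop_zero (𝕜 := ℝ)).const_mul w
    rw [mul_zero] at this
    have h := tendsto_const_nhds (x := (1:ℝ)) (f := atTop).add this
    rw [add_zero] at h
    simpa [div_eq_mul_inv] using h
  have hc : ContinuousAt (fun x : ℝ => x ^ a) 1 :=
    Real.continuousAt_rpow_const 1 a (Or.inl one_ne_zero)
  have h1 : Tendsto (fun T : ℝ => (1 + w / T) ^ a) atTop (𝓝 1) := by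
    have := hc.tendsto.comp h0
    rwa [Real.one_rpow] at this
  apply h1.congr'
  filter_upwards [eventually_gt_atTop (0:ℝ), eventually_gt_atTop (-w)] with T hT hTw
  rw [show 1 + w / T = (T + w) / T by field_simp, Real.div_rpow (by linarith) hT.le,
    div_eq_mul_inv, ← Real.rpow_neg hT.le, mul_comm]




/-- ratio bound: for `1 ≤ x ≤ B`, `x^a ≤ B^a + 2`. -/
lemma ratio_bound {a x B : ℝ} (hx1 : 1 ≤ x) (hxB : x ≤ B) : x ^ a ≤ B ^ a + 2 := by
  rcases le_or_gt 0 a with h | h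
  · have := Real.rpow_le_rpow (by linarith) hxB h
    linarith
  · have h1 := Real.rpow_le_one_of_one_le_of_nonpos hx1 h.le
    have h2 : (0:ℝ) ≤ B ^ a := Real.rpow_nonneg (by linarith) a
    linarith

/-- ratio bound in `[1/2, 1]` form: for `1/2 ≤ x ≤ 1`, `x^a ≤ (1/2:ℝ)^a + 2`. -/
lemma ratio_bound' {a x : ℝ} (hx1 : 1/2 ≤ x) (hx2 : x ≤ 1) : x ^ a ≤ (1/2:ℝ) ^ a + 2 := by
  rcases le_or_gt 0 a with h | h
  · have := Real.rpow_le_one (by linarith) hx2 h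
    have h2 : (0:ℝ) ≤ (1/2:ℝ) ^ a := Real.rpow_nonneg (by norm_num) a
    linarith
  · have := Real.rpow_le_rpow_of_nonpos (by norm_num) hx1 h.le
    linarith

lemma lim1 {a b s t : ℝ} (ha : -1 < a) (hb1 : -1 < b) (hs : 0 ≤ s) (hst : s ≤ t) :
    Tendsto (fun T : ℝ => T^(-a) * ∫ v in (0:ℝ)..s, (T+v)^a * hh b s t v) atTop
      (𝓝 (∫ v in (0:ℝ)..s, hh b s t v)) := by
  have ht : 0 ≤ t := le_trans hs hst
  set μ := volume.restrict (Ioc (0:ℝ) s) with hμ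
  have main : Tendsto (fun T : ℝ => ∫ v, T^(-a) * ((T+v)^a * hh b s t v) ∂μ) atTop
      (𝓝 (∫ v, hh b s t v ∂μ)) := by
    apply MeasureTheory.tendsto_integral_filter_of_dominated_convergence
      (bound := fun v => ((1+s)^a + 2) * ‖hh b s t v‖)
    · filter_upwards with T
      apply Measurable.aestronglyMeasurable
      have : Measurable (hh b s t) := by unfold hh; fun_prop
      fun_prop
    · filter_upwards [eventually_ge_atTop (1:ℝ)] with T hT
      rw [hμ]
      filter_upwards [ae_restrict_mem measurableSet_Ioc] with v hv
      have hv1 : 0 < v := hv.1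
      have hv2 : v ≤ s := hv.2
      have hT0 : (0:ℝ) < T := by linarith
      have e : T^(-a) * (T+v)^a = ((T+v)/T)^a := by
        rw [Real.div_rpow (by linarith) hT0.le, div_eq_mul_inv, ← Real.rpow_neg hT0.le,
          mul_comm]
      have hx1 : 1 ≤ (T+v)/T := by rw [le_div_iff₀ hT0]; linarith
      have hxB : (T+v)/T ≤ 1 + s := by
        rw [div_le_iff₀ hT0]; nlinarith
      have hbd := ratio_bound (a := a) (B := 1 + s) hx1 hxB
      rw [norm_mul, norm_mul, Real.norm_eq_abs, Real.norm_eq_abs, ← mul_assoc,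
        abs_of_nonneg (Real.rpow_nonneg hT0.le _), abs_of_nonneg (Real.rpow_nonneg (by linarith) _)]
      apply mul_le_mul_of_nonneg_right _ (norm_nonneg _)
      rw [e]; exact hbd
    · have h := (hh_intInt (s := s) (t := t) hb1 0 s).norm
      rw [intervalIntegrable_iff_integrableOn_Ioc_of_le hs] at h
      exact h.const_mul _
    · rw [hμ]
      filter_upwards [ae_restrict_mem measurableSet_Ioc] with v hv
      have h := (ratio_tendsto_gen a v).mul_const (hh b s t v)
      rw [one_mul] at h
      apply h.congr
      intro T; ring
  have e2 : ∀ T : ℝ, T^(-a) * ∫ v in (0:ℝ)..s, (T+v)^a * hh b s t v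
      = ∫ v, T^(-a) * ((T+v)^a * hh b s t v) ∂μ := by
    intro T
    rw [← intervalIntegral.integral_const_mul, intervalIntegral.integral_of_le hs]
  have e3 : (∫ v in (0:ℝ)..s, hh b s t v) = ∫ v, hh b s t v ∂μ :=
    intervalIntegral.integral_of_le hs
  rw [e3]
  exact main.congr (fun T => (e2 T).symm)


lemma II_shape {a b : ℝ} (ha : -1 < a) (hb : -1 < b) {T c k : ℝ} (hT : 0 < T)
    (hc : k * T ≤ c) (hk : 0 < k) :
    IntervalIntegrable (fun u : ℝ => u ^ a * (c - k * u) ^ b) volume 0 T := by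
  have part1 : IntervalIntegrable (fun u : ℝ => u ^ a * (c - k * u) ^ b) volume 0 (T/2) := by
    apply (intervalIntegrable_rpow' ha).mul_continuousOn
    apply ContinuousOn.rpow_const
      (continuousOn_const.sub (continuousOn_const.mul continuousOn_id))
    intro u hu
    rw [uIcc_of_le (by linarith : (0:ℝ) ≤ T/2)] at hu
    have h1 := hu.1; have h2 := hu.2
    exact Or.inl (by simp only [Pi.sub_apply, Pi.mul_apply, id_eq]; nlinarith)
  have part2 : IntervalIntegrable (fun u : ℝ => u ^ a * (c - k * u) ^ b) volume (T/2) T := by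
    apply (II_affine_sub hb c k (T/2) T (ne_of_gt hk)).continuousOn_mul
    apply ContinuousOn.rpow_const continuousOn_id
    intro u hu
    rw [uIcc_of_le (by linarith : T/2 ≤ T)] at hu
    have h1 := hu.1
    simp only [id_eq]
    exact Or.inl (by nlinarith)
  exact part1.trans part2

lemma JJ_int {a b s t T : ℝ} (hb : -1 < b) (hT : 0 < T) (hs : 0 ≤ s) :
    IntervalIntegrable (fun v : ℝ => (T + v) ^ a * hh b s t v) volume 0 s := by
  have i1 : IntervalIntegrable (fun v : ℝ => (T+v)^a * (t - v)^b) volume 0 s := by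
    simpa using II_h (a := a) hb (c := t) (k := 1) hT hs one_pos
  have i2 : IntervalIntegrable (fun v : ℝ => (T+v)^a * (s - v)^b) volume 0 s := by
    simpa using II_h (a := a) hb (c := s) (k := 1) hT hs one_pos
  have i3 : IntervalIntegrable (fun v : ℝ => (T+v)^a * (s + t - 2*v)^b) volume 0 s :=
    II_h (a := a) hb (c := s + t) (k := 2) hT hs two_pos
  have h := (i1.add i2).sub i3
  have e : (fun v : ℝ => (T+v)^a * (t - v)^b + (T+v)^a * (s - v)^b
      - (T+v)^a * (s + t - 2*v)^b) = fun v : ℝ => (T + v) ^ a * hh b s t v := by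
    funext v; simp only [hh]; ring
  rwa [e] at h

lemma key_identity {a b s t T : ℝ} (ha : -1 < a) (hb1 : -1 < b)
    (hs : 0 ≤ s) (hst : s ≤ t) (hT : 0 < T) :
    Q a b (s+T) (t+T) - Q a b (s+T) T - Q a b T (t+T) + Q a b T T
      = (1/(1-b)) * ((∫ v in (0:ℝ)..s, (T+v)^a * hh b s t v)
          + ∫ r in (0:ℝ)..T, (T-r)^a * gg b s t r) := by
  have ht : 0 ≤ t := le_trans hs hst
  -- integrability of individual terms on [0,T]
  have i_t1 : IntervalIntegrable (fun u : ℝ => u^a * (t + T - u)^b) volume 0 T := by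
    simpa using II_shape ha hb1 (c := t + T) (k := 1) hT (by linarith) one_pos
  have i_s1 : IntervalIntegrable (fun u : ℝ => u^a * (s + T - u)^b) volume 0 T := by
    simpa using II_shape ha hb1 (c := s + T) (k := 1) hT (by linarith) one_pos
  have i_T : IntervalIntegrable (fun u : ℝ => u^a * (T - u)^b) volume 0 T := by
    simpa using II_shape ha hb1 (c := T) (k := 1) hT (by linarith) one_pos
  have i_q1 : IntervalIntegrable (fun u : ℝ => u^a * (s + T + (t + T) - 2*u)^b) volume 0 T :=
    II_shape ha hb1 (c := s + T + (t + T)) (k := 2) hT (by linarith) two_pos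
  have i_q2 : IntervalIntegrable (fun u : ℝ => u^a * (s + T + T - 2*u)^b) volume 0 T :=
    II_shape ha hb1 (c := s + T + T) (k := 2) hT (by linarith) two_pos
  have i_q3 : IntervalIntegrable (fun u : ℝ => u^a * (T + (t + T) - 2*u)^b) volume 0 T :=
    II_shape ha hb1 (c := T + (t + T)) (k := 2) hT (by linarith) two_pos
  have i_q4 : IntervalIntegrable (fun u : ℝ => u^a * (T + T - 2*u)^b) volume 0 T :=
    II_shape ha hb1 (c := T + T) (k := 2) hT (by linarith) two_pos
  -- combined integrands on [0,T]
  have I1 : IntervalIntegrable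
      (fun u : ℝ => u^a * ((t+T-u)^b + (s+T-u)^b - (s+T+(t+T)-2*u)^b)) volume 0 T := by
    have h := (i_t1.add i_s1).sub i_q1
    have e : (fun u : ℝ => u^a * (t+T-u)^b + u^a * (s+T-u)^b - u^a * (s+T+(t+T)-2*u)^b)
        = fun u : ℝ => u^a * ((t+T-u)^b + (s+T-u)^b - (s+T+(t+T)-2*u)^b) := by
      funext u; ring
    rwa [e] at h
  have I2 : IntervalIntegrable
      (fun u : ℝ => u^a * ((T-u)^b + (s+T-u)^b - (s+T+T-2*u)^b)) volume 0 T := by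
    have h := (i_T.add i_s1).sub i_q2
    have e : (fun u : ℝ => u^a * (T-u)^b + u^a * (s+T-u)^b - u^a * (s+T+T-2*u)^b)
        = fun u : ℝ => u^a * ((T-u)^b + (s+T-u)^b - (s+T+T-2*u)^b) := by
      funext u; ring
    rwa [e] at h
  have I3 : IntervalIntegrable
      (fun u : ℝ => u^a * ((t+T-u)^b + (T-u)^b - (T+(t+T)-2*u)^b)) volume 0 T := by
    have h := (i_t1.add i_T).sub i_q3
    have e : (fun u : ℝ => u^a * (t+T-u)^b + u^a * (T-u)^b - u^a * (T+(t+T)-2*u)^b)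
        = fun u : ℝ => u^a * ((t+T-u)^b + (T-u)^b - (T+(t+T)-2*u)^b) := by
      funext u; ring
    rwa [e] at h
  have I4 : IntervalIntegrable
      (fun u : ℝ => u^a * ((T-u)^b + (T-u)^b - (T+T-2*u)^b)) volume 0 T := by
    have h := (i_T.add i_T).sub i_q4
    have e : (fun u : ℝ => u^a * (T-u)^b + u^a * (T-u)^b - u^a * (T+T-2*u)^b)
        = fun u : ℝ => u^a * ((T-u)^b + (T-u)^b - (T+T-2*u)^b) := by
      funext u; ring
    rwa [e] at h
  -- integrability of f1 on [T, s+T]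
  have I1b : IntervalIntegrable
      (fun u : ℝ => u^a * ((t+T-u)^b + (s+T-u)^b - (s+T+(t+T)-2*u)^b)) volume T (s+T) := by
    have h := (JJ_int (a := a) (t := t) hb1 hT hs).comp_sub_right T
    rw [zero_add] at h
    have e : (fun u : ℝ => (T + (u - T)) ^ a * hh b s t (u - T))
        = fun u : ℝ => u^a * ((t+T-u)^b + (s+T-u)^b - (s+T+(t+T)-2*u)^b) := by
      funext u; simp only [hh]; ring_nf
    rwa [e] at h
  -- the change-of-variable identities
  have e_tail : (∫ u in T..(s+T), u^a * ((t+T-u)^b + (s+T-u)^b - (s+T+(t+T)-2*u)^b))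
      = ∫ v in (0:ℝ)..s, (T+v)^a * hh b s t v := by
    have h := integral_comp_add_right (a := (0:ℝ)) (b := s)
      (fun u : ℝ => u^a * ((t+T-u)^b + (s+T-u)^b - (s+T+(t+T)-2*u)^b)) T
    rw [zero_add] at h
    rw [← h]
    apply intervalIntegral.integral_congr
    intro v _
    simp only [hh]; ring_nf
  have e_main : (∫ u in (0:ℝ)..T, (u^a * ((t+T-u)^b + (s+T-u)^b - (s+T+(t+T)-2*u)^b)
        - u^a * ((T-u)^b + (s+T-u)^b - (s+T+T-2*u)^b)
        - u^a * ((t+T-u)^b + (T-u)^b - (T+(t+T)-2*u)^b)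
        + u^a * ((T-u)^b + (T-u)^b - (T+T-2*u)^b)))
      = ∫ r in (0:ℝ)..T, (T-r)^a * gg b s t r := by
    have h := integral_comp_sub_left (a := (0:ℝ)) (b := T)
      (fun r : ℝ => (T-r)^a * gg b s t r) T
    rw [sub_self, sub_zero] at h
    rw [← h]
    apply intervalIntegral.integral_congr
    intro u _
    simp only [gg]; ring_nf
  -- unfold Q and min's
  simp only [Q]
  rw [min_eq_left (by linarith : s+T ≤ t+T), min_eq_right (by linarith : T ≤ s+T),
    min_eq_left (by linarith : T ≤ t+T), min_self]
  have split1 := (integral_add_adjacent_intervals I1 I1b).symm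
  rw [split1]
  rw [intervalIntegral.integral_add ((I1.sub I2).sub I3) I4,
    intervalIntegral.integral_sub (I1.sub I2) I3,
    intervalIntegral.integral_sub I1 I2] at e_main
  linear_combination (1/(1-b)) * e_tail + (1/(1-b)) * e_main


section lim2

variable {a b s t : ℝ}

/-- the perturbation integrand -/
noncomputable def chi (a b s t T r : ℝ) : ℝ := (T^(-a) * (T-r)^a - 1) * gg b s t r

lemma K_int (ha : -1 < a) (hb1 : -1 < b) (hs : 0 ≤ s) (ht : 0 ≤ t) {T : ℝ} (hT : 0 < T) :
    IntervalIntegrable (fun r : ℝ => (T-r)^a * gg b s t r) volume 0 T := by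
  have term : ∀ c : ℝ, 0 ≤ c →
      IntervalIntegrable (fun r : ℝ => (T-r)^a * (c + 2*r)^b) volume 0 T := by
    intro c hc
    have h := II_shape (a := a) (b := b) ha hb1 (c := c + 2*T) (k := 2) hT (by linarith) two_pos
    have h2 := (h.comp_sub_left T).symm
    rw [sub_self, sub_zero] at h2
    have e : (fun r : ℝ => (T - r) ^ a * (c + 2*T - 2 * (T - r)) ^ b)
        = fun r : ℝ => (T-r)^a * (c + 2*r)^b := by
      funext r; ring_nf
    rwa [e] at h2
  have i1 := term s hs
  have i2 := term t ht
  have i3 := term (s+t) (by linarith)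
  have i4 : IntervalIntegrable (fun r : ℝ => (T-r)^a * (2*r)^b) volume 0 T := by
    simpa using term 0 le_rfl
  have h := ((i1.add i2).sub i3).sub i4
  have e : (fun r : ℝ => (T-r)^a * (s + 2*r)^b + (T-r)^a * (t + 2*r)^b
      - (T-r)^a * (s + t + 2*r)^b - (T-r)^a * (2*r)^b)
      = fun r : ℝ => (T-r)^a * gg b s t r := by
    funext r; simp only [gg]; ring
  rwa [e] at h

lemma chi_int (ha : -1 < a) (hb1 : -1 < b) (hs : 0 ≤ s) (ht : 0 ≤ t) {T : ℝ} (hT : 0 < T) :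
    IntervalIntegrable (chi a b s t T) volume 0 T := by
  have h := ((K_int ha hb1 hs ht hT).const_mul (T^(-a))).sub (gg_intInt (s := s) (t := t) hb1 0 T)
  have e : (fun r : ℝ => T^(-a) * ((T-r)^a * gg b s t r) - gg b s t r)
      = chi a b s t T := by
    funext r; simp only [chi]; ring
  rwa [e] at h

lemma chi_meas (T : ℝ) : Measurable (chi a b s t T) := by
  have : Measurable (gg b s t) := by unfold gg; fun_prop
  unfold chi; fun_prop

lemma D1_tendsto (ha : -1 < a) (hb1 : -1 < b) (hb2 : b < 1) (hs : 0 ≤ s) (ht : 0 ≤ t) :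
    Tendsto (fun T : ℝ => ∫ r in (0:ℝ)..(T/2), chi a b s t T r) atTop (𝓝 0) := by
  set μ := volume.restrict (Ioi (0:ℝ)) with hμ
  have main : Tendsto (fun T : ℝ => ∫ r, (Ioc (0:ℝ) (T/2)).indicator (chi a b s t T) r ∂μ)
      atTop (𝓝 (∫ _ : ℝ, (0:ℝ) ∂μ)) := by
    apply MeasureTheory.tendsto_integral_filter_of_dominated_convergence
      (bound := fun r => ((1/2:ℝ)^a + 3) * ‖gg b s t r‖)
    · filter_upwards with T
      exact ((chi_meas T).indicator measurableSet_Ioc).aestronglyMeasurable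
    · filter_upwards [eventually_ge_atTop (1:ℝ)] with T hT
      rw [hμ]
      filter_upwards [ae_restrict_mem measurableSet_Ioi] with r hr
      rcases em (r ∈ Ioc (0:ℝ) (T/2)) with hmem | hmem
      · rw [indicator_of_mem hmem]
        have hr1 : 0 < r := hmem.1
        have hr2 : r ≤ T/2 := hmem.2
        have hT0 : (0:ℝ) < T := by linarith
        have e : T^(-a) * (T-r)^a = ((T-r)/T)^a := by
          rw [Real.div_rpow (by linarith) hT0.le, div_eq_mul_inv, ← Real.rpow_neg hT0.le,
            mul_comm]
        have hx1 : 1/2 ≤ (T-r)/T := by rw [le_div_iff₀ hT0]; linarith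
        have hx2 : (T-r)/T ≤ 1 := by rw [div_le_one hT0]; linarith
        have hbd := ratio_bound' (a := a) hx1 hx2
        rw [chi, norm_mul]
        apply mul_le_mul_of_nonneg_right _ (norm_nonneg _)
        rw [Real.norm_eq_abs]
        have h1 : |T^(-a) * (T-r)^a - 1| ≤ T^(-a) * (T-r)^a + 1 := by
          have := abs_sub (T^(-a) * (T-r)^a) (1:ℝ)
          have hnn : 0 ≤ T^(-a) * (T-r)^a :=
            mul_nonneg (Real.rpow_nonneg hT0.le _) (Real.rpow_nonneg (by linarith) _)
          calc |T^(-a) * (T-r)^a - 1| ≤ |T^(-a) * (T-r)^a| + |1| := abs_sub _ _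
            _ = T^(-a) * (T-r)^a + 1 := by rw [abs_of_nonneg hnn, abs_one]
        calc |T^(-a) * (T-r)^a - 1| ≤ T^(-a) * (T-r)^a + 1 := h1
          _ = ((T-r)/T)^a + 1 := by rw [e]
          _ ≤ ((1/2:ℝ)^a + 2) + 1 := by linarith [hbd]
          _ = (1/2:ℝ)^a + 3 := by ring
      · rw [indicator_of_notMem hmem]
        simp only [norm_zero]
        positivity
    · exact ((gg_integrableOn hb1 hb2 hs ht).norm.const_mul _)
    · rw [hμ]
      filter_upwards [ae_restrict_mem measurableSet_Ioi] with r hr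
      simp only [mem_Ioi] at hr
      have hratio : Tendsto (fun T : ℝ => T^(-a) * (T-r)^a) atTop (𝓝 1) := by
        have := ratio_tendsto_gen a (-r)
        apply this.congr
        intro T
        rw [← sub_eq_add_neg]
      have h := (hratio.sub_const 1).mul_const (gg b s t r)
      rw [sub_self, zero_mul] at h
      apply h.congr'
      filter_upwards [eventually_ge_atTop (2*r)] with T hT
      rw [indicator_of_mem (by constructor <;> [exact hr; linarith] : r ∈ Ioc 0 (T/2))]
      rfl
  rw [MeasureTheory.integral_zero] at main
  apply main.congr'
  filter_upwards [eventually_ge_atTop (0:ℝ)] with T hT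
  rw [hμ, MeasureTheory.integral_indicator measurableSet_Ioc, Measure.restrict_restrict measurableSet_Ioc,
    inter_eq_self_of_subset_left Ioc_subset_Ioi_self,
    intervalIntegral.integral_of_le (by linarith : (0:ℝ) ≤ T/2)]

end lim2


section D2
variable {a b s t : ℝ}

lemma int_tendsto_Ioi (hb1 : -1 < b) (hb2 : b < 1) (hs : 0 ≤ s) (ht : 0 ≤ t) :
    Tendsto (fun T : ℝ => ∫ r in (0:ℝ)..T, gg b s t r) atTop
      (𝓝 (∫ r in Ioi (0:ℝ), gg b s t r)) := by
  have h := intervalIntegral_tendsto_integral_Ioi 0 (gg_integrableOn hb1 hb2 hs ht) tendsto_id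
  exact h

lemma norm_int_tendsto (hb1 : -1 < b) (hb2 : b < 1) (hs : 0 ≤ s) (ht : 0 ≤ t) :
    Tendsto (fun T : ℝ => (∫ r in (0:ℝ)..T, ‖gg b s t r‖)
      - ∫ r in (0:ℝ)..(T/2), ‖gg b s t r‖) atTop (𝓝 0) := by
  have hN := (gg_integrableOn hb1 hb2 hs ht).norm
  have h1 := intervalIntegral_tendsto_integral_Ioi 0 hN tendsto_id
  have h2 := intervalIntegral_tendsto_integral_Ioi 0 hN (tendsto_id.atTop_div_const two_pos)
  have h3 := h1.sub h2
  rw [sub_self] at h3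
  exact h3

lemma D2_tendsto (ha : -1 < a) (hb1 : -1 < b) (hb2 : b < 1) (hs : 0 ≤ s) (ht : 0 ≤ t) :
    Tendsto (fun T : ℝ => ∫ r in (T/2)..T, chi a b s t T r) atTop (𝓝 0) := by
  have ha1 : (0:ℝ) < a + 1 := by linarith
  set Cg := |b| * |b - 1| * s * t * 2 ^ (b - 2) with hCg
  have hCg0 : 0 ≤ Cg := by rw [hCg]; positivity
  have hβ : Tendsto (fun T : ℝ => Cg * 2^(1-a-b)/(a+1) * T^(b-1)
      + ((∫ r in (0:ℝ)..T, ‖gg b s t r‖) - ∫ r in (0:ℝ)..(T/2), ‖gg b s t r‖))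
      atTop (𝓝 0) := by
    have h1 : Tendsto (fun T : ℝ => Cg * 2^(1-a-b)/(a+1) * T^(b-1)) atTop (𝓝 0) := by
      have h := (tendsto_rpow_neg_atTop (by linarith : (0:ℝ) < 1 - b)).const_mul
        (Cg * 2^(1-a-b)/(a+1))
      rw [mul_zero] at h
      simpa only [show -(1 - b) = b - 1 by ring] using h
    have := h1.add (norm_int_tendsto hb1 hb2 hs ht)
    rwa [add_zero] at this
  refine squeeze_zero_norm' ?_ hβ
  filter_upwards [eventually_ge_atTop (2:ℝ)] with T hT2
  have hT0 : (0:ℝ) < T := by linarith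
  have hhalf0 : (0:ℝ) < T/2 := by linarith
  set K1 := T^(-a) * (Cg * (T/2)^(b-2)) with hK1
  have hK10 : 0 ≤ K1 := by
    rw [hK1]
    have := Real.rpow_nonneg hT0.le (-a)
    have := Real.rpow_nonneg hhalf0.le (b-2)
    positivity
  -- pointwise bound on Icc (T/2) T
  have hpt : ∀ r ∈ Icc (T/2) T, |chi a b s t T r| ≤ (T - r)^a * K1 + ‖gg b s t r‖ := by
    intro r hr
    have hr1 : T/2 ≤ r := hr.1
    have hr2 : r ≤ T := hr.2
    have hr0 : 0 < r := by linarith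
    have hTr : 0 ≤ T - r := by linarith
    have hxa : 0 ≤ T^(-a) * (T-r)^a :=
      mul_nonneg (Real.rpow_nonneg hT0.le _) (Real.rpow_nonneg hTr _)
    have h1 : |T^(-a) * (T-r)^a - 1| ≤ T^(-a) * (T-r)^a + 1 :=
      calc |T^(-a) * (T-r)^a - 1| ≤ |T^(-a) * (T-r)^a| + |1| := abs_sub _ _
        _ = T^(-a) * (T-r)^a + 1 := by rw [abs_of_nonneg hxa, abs_one]
    have hgb : |gg b s t r| ≤ Cg * (T/2)^(b-2) := by
      have hg1 := gg_bound (by linarith : b ≤ 2) hs ht hr0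
      have hg2 : r ^ (b-2) ≤ (T/2) ^ (b-2) :=
        Real.rpow_le_rpow_of_nonpos hhalf0 hr1 (by linarith)
      calc |gg b s t r| ≤ Cg * r^(b-2) := hg1
        _ ≤ Cg * (T/2)^(b-2) := mul_le_mul_of_nonneg_left hg2 hCg0
    calc |chi a b s t T r| = |T^(-a) * (T-r)^a - 1| * |gg b s t r| := by
          rw [chi, abs_mul]
      _ ≤ (T^(-a) * (T-r)^a + 1) * |gg b s t r| :=
          mul_le_mul_of_nonneg_right h1 (abs_nonneg _)
      _ = T^(-a) * (T-r)^a * |gg b s t r| + |gg b s t r| := by ring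
      _ ≤ T^(-a) * (T-r)^a * (Cg * (T/2)^(b-2)) + |gg b s t r| := by
          have := mul_le_mul_of_nonneg_left hgb hxa
          linarith
      _ = (T - r)^a * K1 + ‖gg b s t r‖ := by rw [hK1, Real.norm_eq_abs]; ring
  -- integrabilities on [T/2, T]
  have i_aff : IntervalIntegrable (fun r : ℝ => (T - r)^a) volume (T/2) T := by
    simpa using II_affine_sub ha T 1 (T/2) T one_ne_zero
  have i_chi : IntervalIntegrable (chi a b s t T) volume (T/2) T := by
    apply (chi_int ha hb1 hs ht hT0).mono_set
    rw [uIcc_of_le (by linarith : T/2 ≤ T), uIcc_of_le (by linarith : (0:ℝ) ≤ T)]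
    exact Icc_subset_Icc (by linarith) le_rfl
  have i_rhs : IntervalIntegrable (fun r : ℝ => (T - r)^a * K1 + ‖gg b s t r‖)
      volume (T/2) T := (i_aff.mul_const K1).add (gg_intInt hb1 (T/2) T).norm
  -- chain
  have step1 : ‖∫ r in (T/2)..T, chi a b s t T r‖ ≤ ∫ r in (T/2)..T, |chi a b s t T r| := by
    rw [Real.norm_eq_abs]
    exact intervalIntegral.abs_integral_le_integral_abs (by linarith)
  have step2 : (∫ r in (T/2)..T, |chi a b s t T r|)
      ≤ ∫ r in (T/2)..T, ((T - r)^a * K1 + ‖gg b s t r‖) := by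
    apply intervalIntegral.integral_mono_on (by linarith) i_chi.abs i_rhs
    exact hpt
  have step3 : (∫ r in (T/2)..T, ((T - r)^a * K1 + ‖gg b s t r‖))
      = (∫ r in (T/2)..T, (T - r)^a) * K1 + ∫ r in (T/2)..T, ‖gg b s t r‖ := by
    rw [intervalIntegral.integral_add (i_aff.mul_const K1) (gg_intInt hb1 (T/2) T).norm,
      intervalIntegral.integral_mul_const]
  have step4 : (∫ r in (T/2)..T, (T - r)^a) = (T/2)^(a+1)/(a+1) := by
    have hcomp := integral_comp_sub_left (a := T/2) (b := T) (fun u : ℝ => u^a) T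
    rw [sub_self, show T - T/2 = T/2 by ring] at hcomp
    rw [hcomp, integral_rpow (Or.inl ha), Real.zero_rpow (by linarith : a + 1 ≠ 0)]
    ring
  have step5 : (∫ r in (T/2)..T, ‖gg b s t r‖)
      = (∫ r in (0:ℝ)..T, ‖gg b s t r‖) - ∫ r in (0:ℝ)..(T/2), ‖gg b s t r‖ := by
    have := integral_add_adjacent_intervals (gg_intInt (s := s) (t := t) hb1 0 (T/2)).norm
      (gg_intInt (s := s) (t := t) hb1 (T/2) T).norm
    linarith [this]
  have step6 : (T/2)^(a+1)/(a+1) * K1 = Cg * 2^(1-a-b)/(a+1) * T^(b-1) := by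
    have hhalfpow : ∀ x : ℝ, ((T/2):ℝ)^x = T^x * 2^(-x) := by
      intro x
      rw [div_eq_mul_inv, Real.mul_rpow hT0.le (by norm_num),
        Real.inv_rpow (by norm_num : (0:ℝ) ≤ 2), ← Real.rpow_neg (by norm_num : (0:ℝ) ≤ 2)]
    rw [hK1, hhalfpow (a+1), hhalfpow (b-2)]
    have e1 : T^(a+1) * 2^(-(a+1))/(a+1) * (T^(-a) * (Cg * (T^(b-2) * 2^(-(b-2)))))
        = Cg/(a+1) * (T^(a+1) * T^(-a) * T^(b-2)) * (2^(-(a+1)) * 2^(-(b-2))) := by ring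
    rw [e1, ← Real.rpow_add hT0, ← Real.rpow_add hT0,
      ← Real.rpow_add (by norm_num : (0:ℝ) < 2),
      show a + 1 + -a + (b-2) = b - 1 by ring, show -(a+1) + -(b-2) = 1 - a - b by ring]
    ring
  calc ‖∫ r in (T/2)..T, chi a b s t T r‖
      ≤ ∫ r in (T/2)..T, |chi a b s t T r| := step1
    _ ≤ ∫ r in (T/2)..T, ((T - r)^a * K1 + ‖gg b s t r‖) := step2
    _ = (T/2)^(a+1)/(a+1) * K1 + ((∫ r in (0:ℝ)..T, ‖gg b s t r‖)
        - ∫ r in (0:ℝ)..(T/2), ‖gg b s t r‖) := by rw [step3, step4, step5]; try ring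
    _ = Cg * 2^(1-a-b)/(a+1) * T^(b-1) + ((∫ r in (0:ℝ)..T, ‖gg b s t r‖)
        - ∫ r in (0:ℝ)..(T/2), ‖gg b s t r‖) := by rw [step6]

lemma lim2 (ha : -1 < a) (hb1 : -1 < b) (hb2 : b < 1) (hs : 0 ≤ s) (ht : 0 ≤ t) :
    Tendsto (fun T : ℝ => T^(-a) * ∫ r in (0:ℝ)..T, (T-r)^a * gg b s t r) atTop
      (𝓝 (∫ r in Ioi (0:ℝ), gg b s t r)) := by
  have h := ((int_tendsto_Ioi hb1 hb2 hs ht).add (D1_tendsto ha hb1 hb2 hs ht)).add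
    (D2_tendsto ha hb1 hb2 hs ht)
  rw [add_zero, add_zero] at h
  apply h.congr'
  filter_upwards [eventually_gt_atTop (0:ℝ)] with T hT0
  have hsplit : (∫ r in (0:ℝ)..(T/2), chi a b s t T r) + ∫ r in (T/2)..T, chi a b s t T r
      = ∫ r in (0:ℝ)..T, chi a b s t T r := by
    apply integral_add_adjacent_intervals
    · apply (chi_int ha hb1 hs ht hT0).mono_set
      rw [uIcc_of_le (by linarith : (0:ℝ) ≤ T/2), uIcc_of_le (by linarith : (0:ℝ) ≤ T)]
      exact Icc_subset_Icc le_rfl (by linarith)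
    · apply (chi_int ha hb1 hs ht hT0).mono_set
      rw [uIcc_of_le (by linarith : T/2 ≤ T), uIcc_of_le (by linarith : (0:ℝ) ≤ T)]
      exact Icc_subset_Icc (by linarith) le_rfl
  have hchi : (∫ r in (0:ℝ)..T, chi a b s t T r)
      = T^(-a) * (∫ r in (0:ℝ)..T, (T-r)^a * gg b s t r) - ∫ r in (0:ℝ)..T, gg b s t r := by
    have e : chi a b s t T = fun r =>
        T^(-a) * ((T-r)^a * gg b s t r) - gg b s t r := by
      funext r; rw [chi]; ring
    rw [e, intervalIntegral.integral_sub ((K_int ha hb1 hs ht hT0).const_mul _)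
      (gg_intInt hb1 0 T), intervalIntegral.integral_const_mul]
  linarith [hsplit, hchi]
end D2


theorem stmt18 (a b : ℝ) (ha : -1 < a) (hb1 : -1 < b) (hb2 : b < 1)
    (hab : 0 < a + b + 1)
    (s t : ℝ) (hs : 0 ≤ s) (ht : 0 ≤ t) :
    Tendsto (fun T : ℝ =>
        T ^ (-a) *
          (Q a b (s + T) (t + T) - Q a b (s + T) T - Q a b T (t + T) + Q a b T T))
      atTop
      (nhds ((1 / ((1 - b) * (b + 1))) *
        ((1 / 2) * (s ^ (b + 1) + t ^ (b + 1) - |t - s| ^ (b + 1))))) := by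
  have hb1' : (1:ℝ) - b ≠ 0 := by linarith
  have hbp : b + 1 ≠ 0 := by linarith
  wlog hst : s ≤ t generalizing s t with H
  · push_neg at hst
    have h := H t s ht hs hst.le
    have hQsymm : ∀ w z : ℝ, Q a b w z = Q a b z w := by
      intro w z
      rw [Q, Q, min_comm]
      congr 1
      apply intervalIntegral.integral_congr
      intro u _
      ring_nf
    have hconst : (1 / ((1 - b) * (b + 1))) * ((1/2) * (t ^ (b+1) + s ^ (b+1) - |s - t| ^ (b+1)))
        = (1 / ((1 - b) * (b + 1))) * ((1/2) * (s ^ (b+1) + t ^ (b+1) - |t - s| ^ (b+1))) := by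
      rw [abs_sub_comm]; ring
    rw [← hconst]
    apply h.congr
    intro T
    rw [hQsymm (s+T) (t+T), hQsymm (s+T) T, hQsymm T (t+T)]
    ring
  have L := ((lim1 ha hb1 hs hst).add (lim2 ha hb1 hb2 hs ht)).const_mul (1/(1-b))
  have hval : (1/(1-b)) * ((∫ v in (0:ℝ)..s, hh b s t v) + ∫ r in Ioi (0:ℝ), gg b s t r)
      = (1 / ((1 - b) * (b + 1))) * ((1/2) * (s ^ (b+1) + t ^ (b+1) - |t - s| ^ (b+1))) := by
    rw [hh_integral hb1 hs hst, gg_integral hb1 hb2 hs ht,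
      abs_of_nonneg (by linarith : (0:ℝ) ≤ t - s)]
    field_simp
    ring
  rw [← hval]
  apply L.congr'
  filter_upwards [eventually_gt_atTop (0:ℝ)] with T hT0
  have hid := key_identity ha hb1 hs hst hT0
  rw [hid]
  ring
end
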